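/- arXiv:2409.19977 — 6 statements merged into one kernel-verified Lean document; each statement's English description precedes it below -/
import Mathlib

section
/- Let μ₁, μ₂ ∈ ℝ and σ₁, σ₂, σ₃, σ₄ > 0. Let p be the pushforward of the standard Gaussian measure gaussianReal 0 1 under the map x ↦ (if x ≤ 0 then σ₁·x + μ₁ else σ₂·x + μ₁), and let q be the pushforward of gaussianReal 0 1 under x ↦ (if x ≤ 0 then σ₃·x + μ₂ else σ₄·x + μ₂). Then W₂²(p, q) = (μ₁ − μ₂)² + (1/2)(σ₁ − σ₃)² + (1/2)(σ₂ − σ₄)² + √(2/π)·(μ₁ − μ₂)·(σ₂ − σ₁ + σ₃ − σ₄). -/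
open MeasureTheory ProbabilityTheory
open scoped ENNReal NNReal

set_option maxHeartbeats 1000000
open Set Filter Real



noncomputable def eFun (x s : ℝ) : ℝ :=
  (if s < x then (1:ℝ) else 0) - (if x ≤ -s then (1:ℝ) else 0)

lemma measurable_eFun : Measurable (fun p : ℝ × ℝ => eFun p.1 p.2) := by
  unfold eFun
  apply Measurable.sub
  · exact Measurable.ite (measurableSet_lt measurable_snd measurable_fst)
      measurable_const measurable_const
  · exact Measurable.ite (measurableSet_le measurable_fst measurable_snd.neg)
      measurable_const measurable_const

lemma eFun_eq_indicator (x : ℝ) {s : ℝ} (hs : s ∈ Ioi (0:ℝ)) :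
    eFun x s = (Ioo 0 x).indicator (fun _ => (1:ℝ)) s
      - (Ioc 0 (-x)).indicator (fun _ => (1:ℝ)) s := by
  simp only [mem_Ioi] at hs
  unfold eFun
  rw [indicator_apply, indicator_apply]
  simp only [mem_Ioo, mem_Ioc]
  congr 1
  · by_cases h : s < x <;> simp [h, hs]
  · by_cases h : x ≤ -s
    · simp [h, hs, le_neg.mp h]
    · have : ¬ s ≤ -x := fun hc => h (le_neg.mpr hc)
      simp [h, this]

lemma abs_eFun_eq_indicator (x : ℝ) {s : ℝ} (hs : s ∈ Ioi (0:ℝ)) :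
    |eFun x s| = (Ioo 0 x).indicator (fun _ => (1:ℝ)) s
      + (Ioc 0 (-x)).indicator (fun _ => (1:ℝ)) s := by
  rw [eFun_eq_indicator x hs]
  rcases le_or_gt x 0 with hx | hx
  · have h1 : (Ioo 0 x) = ∅ := Ioo_eq_empty (by linarith)
    simp only [h1, indicator_empty, Pi.zero_apply, zero_sub, zero_add, abs_neg]
    exact abs_of_nonneg (indicator_nonneg (fun _ _ => zero_le_one) s)
  · have h2 : (Ioc 0 (-x)) = ∅ := Ioc_eq_empty (by linarith)
    simp only [h2, indicator_empty, Pi.zero_apply, sub_zero, add_zero]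
    exact abs_of_nonneg (indicator_nonneg (fun _ _ => zero_le_one) s)

lemma integrableOn_ind (a b : ℝ) :
    Integrable ((Ioo a b).indicator (fun _ => (1:ℝ))) (volume.restrict (Ioi 0)) := by
  rw [integrable_indicator_iff measurableSet_Ioo]
  refine (integrableOn_const_iff (C := (1:ℝ))).mpr (Or.inr ?_)
  rw [Measure.restrict_apply measurableSet_Ioo]
  exact lt_of_le_of_lt (measure_mono inter_subset_left) measure_Ioo_lt_top

lemma integrableOn_ind' (a b : ℝ) :
    Integrable ((Ioc a b).indicator (fun _ => (1:ℝ))) (volume.restrict (Ioi 0)) := by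
  rw [integrable_indicator_iff measurableSet_Ioc]
  refine (integrableOn_const_iff (C := (1:ℝ))).mpr (Or.inr ?_)
  rw [Measure.restrict_apply measurableSet_Ioc]
  exact lt_of_le_of_lt (measure_mono inter_subset_left) measure_Ioc_lt_top

lemma integrable_eFun (x : ℝ) : Integrable (eFun x) (volume.restrict (Ioi 0)) := by
  have : Integrable (fun s => (Ioo 0 x).indicator (fun _ => (1:ℝ)) s
      - (Ioc 0 (-x)).indicator (fun _ => (1:ℝ)) s) (volume.restrict (Ioi 0)) :=
    (integrableOn_ind 0 x).sub (integrableOn_ind' 0 (-x))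
  refine this.congr ?_
  filter_upwards [ae_restrict_mem measurableSet_Ioi] with s hs
  exact (eFun_eq_indicator x hs).symm

lemma integral_ind (b : ℝ) :
    ∫ s in Ioi (0:ℝ), (Ioo 0 b).indicator (fun _ => (1:ℝ)) s = max b 0 := by
  rw [integral_indicator measurableSet_Ioo]
  rw [setIntegral_const, smul_eq_mul, mul_one]
  rw [Measure.real, Measure.restrict_apply measurableSet_Ioo]
  have : Ioo 0 b ∩ Ioi 0 = Ioo 0 b := inter_eq_left.mpr (fun y hy => hy.1)
  rw [this, Real.volume_Ioo]
  rcases le_or_gt b 0 with h | h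
  · rw [max_eq_right h, ENNReal.ofReal_eq_zero.mpr (by linarith), ENNReal.toReal_zero]
  · rw [ENNReal.toReal_ofReal (by linarith), max_eq_left h.le, sub_zero]

lemma integral_ind' (b : ℝ) :
    ∫ s in Ioi (0:ℝ), (Ioc 0 b).indicator (fun _ => (1:ℝ)) s = max b 0 := by
  rw [integral_indicator measurableSet_Ioc]
  rw [setIntegral_const, smul_eq_mul, mul_one]
  rw [Measure.real, Measure.restrict_apply measurableSet_Ioc]
  have : Ioc 0 b ∩ Ioi 0 = Ioc 0 b := inter_eq_left.mpr (fun y hy => hy.1)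
  rw [this, Real.volume_Ioc]
  rcases le_or_gt b 0 with h | h
  · rw [max_eq_right h, ENNReal.ofReal_eq_zero.mpr (by linarith), ENNReal.toReal_zero]
  · rw [ENNReal.toReal_ofReal (by linarith), max_eq_left h.le, sub_zero]

lemma integral_eFun (x : ℝ) : ∫ s in Ioi (0:ℝ), eFun x s = x := by
  rw [setIntegral_congr_fun measurableSet_Ioi (fun s hs => eFun_eq_indicator x hs)]
  rw [integral_sub (integrableOn_ind 0 x) (integrableOn_ind' 0 (-x))]
  rw [integral_ind, integral_ind']
  rcases le_or_gt x 0 with h | h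
  · rw [max_eq_right h, max_eq_left (by linarith), zero_sub, neg_neg]
  · rw [max_eq_left h.le, max_eq_right (by linarith), sub_zero]

lemma integral_abs_eFun (x : ℝ) : ∫ s in Ioi (0:ℝ), |eFun x s| = |x| := by
  rw [setIntegral_congr_fun measurableSet_Ioi (fun s hs => abs_eFun_eq_indicator x hs)]
  rw [integral_add (integrableOn_ind 0 x) (integrableOn_ind' 0 (-x))]
  rw [integral_ind, integral_ind']
  rcases le_or_gt x 0 with h | h
  · rw [max_eq_right h, max_eq_left (by linarith), zero_add, abs_of_nonpos h]
  · rw [max_eq_left h.le, max_eq_right (by linarith), add_zero, abs_of_pos h]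


section S2
variable (γ : Measure (ℝ × ℝ)) [IsProbabilityMeasure γ]

lemma mUU (s t : ℝ) : MeasurableSet {z : ℝ × ℝ | s < z.1 ∧ t < z.2} :=
  (measurable_fst measurableSet_Ioi).inter (measurable_snd measurableSet_Ioi)
lemma mLL (s t : ℝ) : MeasurableSet {z : ℝ × ℝ | z.1 ≤ s ∧ z.2 ≤ t} :=
  (measurable_fst measurableSet_Iic).inter (measurable_snd measurableSet_Iic)
lemma mUL (s t : ℝ) : MeasurableSet {z : ℝ × ℝ | s < z.1 ∧ z.2 ≤ t} :=
  (measurable_fst measurableSet_Ioi).inter (measurable_snd measurableSet_Iic)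
lemma mLU (s t : ℝ) : MeasurableSet {z : ℝ × ℝ | z.1 ≤ s ∧ t < z.2} :=
  (measurable_fst measurableSet_Iic).inter (measurable_snd measurableSet_Ioi)

/-- splitting in the second coordinate : UU + UL = MU -/
lemma split_UU_UL (s t : ℝ) :
    (γ {z : ℝ × ℝ | s < z.1 ∧ t < z.2}).toReal + (γ {z : ℝ × ℝ | s < z.1 ∧ z.2 ≤ t}).toReal
      = (γ {z : ℝ × ℝ | s < z.1}).toReal := by
  have hset : {z : ℝ × ℝ | s < z.1 ∧ t < z.2} ∪ {z : ℝ × ℝ | s < z.1 ∧ z.2 ≤ t}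
      = {z : ℝ × ℝ | s < z.1} := by
    ext z
    simp only [mem_union, mem_setOf_eq]
    constructor
    · rintro (⟨h, _⟩ | ⟨h, _⟩) <;> exact h
    · intro h
      rcases lt_or_ge t z.2 with h2 | h2
      · exact Or.inl ⟨h, h2⟩
      · exact Or.inr ⟨h, h2⟩
  have hdis : Disjoint {z : ℝ × ℝ | s < z.1 ∧ t < z.2} {z : ℝ × ℝ | s < z.1 ∧ z.2 ≤ t} := by
    rw [Set.disjoint_left]
    rintro z ⟨_, h2⟩ ⟨_, h2'⟩
    exact absurd h2' (not_le.mpr h2)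
  rw [← hset, measure_union hdis (mUL s t),
    ENNReal.toReal_add (measure_ne_top _ _) (measure_ne_top _ _)]

lemma split_LU_LL (s t : ℝ) :
    (γ {z : ℝ × ℝ | z.1 ≤ s ∧ t < z.2}).toReal + (γ {z : ℝ × ℝ | z.1 ≤ s ∧ z.2 ≤ t}).toReal
      = (γ {z : ℝ × ℝ | z.1 ≤ s}).toReal := by
  have hset : {z : ℝ × ℝ | z.1 ≤ s ∧ t < z.2} ∪ {z : ℝ × ℝ | z.1 ≤ s ∧ z.2 ≤ t}
      = {z : ℝ × ℝ | z.1 ≤ s} := by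
    ext z
    simp only [mem_union, mem_setOf_eq]
    constructor
    · rintro (⟨h, _⟩ | ⟨h, _⟩) <;> exact h
    · intro h
      rcases lt_or_ge t z.2 with h2 | h2
      · exact Or.inl ⟨h, h2⟩
      · exact Or.inr ⟨h, h2⟩
  have hdis : Disjoint {z : ℝ × ℝ | z.1 ≤ s ∧ t < z.2} {z : ℝ × ℝ | z.1 ≤ s ∧ z.2 ≤ t} := by
    rw [Set.disjoint_left]
    rintro z ⟨_, h2⟩ ⟨_, h2'⟩
    exact absurd h2' (not_le.mpr h2)
  rw [← hset, measure_union hdis (mLL s t),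
    ENNReal.toReal_add (measure_ne_top _ _) (measure_ne_top _ _)]

lemma split_UL_LL (s t : ℝ) :
    (γ {z : ℝ × ℝ | s < z.1 ∧ z.2 ≤ t}).toReal + (γ {z : ℝ × ℝ | z.1 ≤ s ∧ z.2 ≤ t}).toReal
      = (γ {z : ℝ × ℝ | z.2 ≤ t}).toReal := by
  have hset : {z : ℝ × ℝ | s < z.1 ∧ z.2 ≤ t} ∪ {z : ℝ × ℝ | z.1 ≤ s ∧ z.2 ≤ t}
      = {z : ℝ × ℝ | z.2 ≤ t} := by
    ext z
    simp only [mem_union, mem_setOf_eq]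
    constructor
    · rintro (⟨_, h⟩ | ⟨_, h⟩) <;> exact h
    · intro h
      rcases lt_or_ge s z.1 with h2 | h2
      · exact Or.inl ⟨h2, h⟩
      · exact Or.inr ⟨h2, h⟩
  have hdis : Disjoint {z : ℝ × ℝ | s < z.1 ∧ z.2 ≤ t} {z : ℝ × ℝ | z.1 ≤ s ∧ z.2 ≤ t} := by
    rw [Set.disjoint_left]
    rintro z ⟨h2, _⟩ ⟨h2', _⟩
    exact absurd h2' (not_le.mpr h2)
  rw [← hset, measure_union hdis (mLL s t),
    ENNReal.toReal_add (measure_ne_top _ _) (measure_ne_top _ _)]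

/-- The integral of `eFun z.1 s * eFun z.2 t` in terms of measures of quadrant sets. -/
lemma integral_eFun_mul (s t : ℝ) :
    ∫ z, eFun z.1 s * eFun z.2 t ∂γ
      = (γ {z : ℝ × ℝ | s < z.1 ∧ t < z.2}).toReal
        - (γ {z : ℝ × ℝ | s < z.1 ∧ z.2 ≤ -t}).toReal
        - (γ {z : ℝ × ℝ | z.1 ≤ -s ∧ t < z.2}).toReal
        + (γ {z : ℝ × ℝ | z.1 ≤ -s ∧ z.2 ≤ -t}).toReal := by
  have hfun : ∀ z : ℝ × ℝ, eFun z.1 s * eFun z.2 t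
      = ({z : ℝ × ℝ | s < z.1 ∧ t < z.2}.indicator (fun _ => (1:ℝ)) z
        - {z : ℝ × ℝ | s < z.1 ∧ z.2 ≤ -t}.indicator (fun _ => (1:ℝ)) z)
        - ({z : ℝ × ℝ | z.1 ≤ -s ∧ t < z.2}.indicator (fun _ => (1:ℝ)) z
        - {z : ℝ × ℝ | z.1 ≤ -s ∧ z.2 ≤ -t}.indicator (fun _ => (1:ℝ)) z) := by
    intro z
    by_cases h1 : s < z.1 <;> by_cases h2 : z.1 ≤ -s <;>
      by_cases h3 : t < z.2 <;> by_cases h4 : z.2 ≤ -t <;>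
      simp [eFun, indicator_apply, h1, h2, h3, h4]
  have hint : ∀ (S : Set (ℝ × ℝ)), MeasurableSet S →
      Integrable (S.indicator (fun _ => (1:ℝ))) γ := by
    intro S hS
    rw [integrable_indicator_iff hS]
    exact (integrableOn_const_iff (C := (1:ℝ))).mpr (Or.inr (measure_lt_top _ _))
  have iUU := hint _ (mUU s t)
  have iUL := hint _ (mUL s (-t))
  have iLU := hint _ (mLU (-s) t)
  have iLL := hint _ (mLL (-s) (-t))
  have i1 : Integrable (fun z : ℝ × ℝ => {z : ℝ × ℝ | s < z.1 ∧ t < z.2}.indicator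
      (fun _ => (1:ℝ)) z - {z : ℝ × ℝ | s < z.1 ∧ z.2 ≤ -t}.indicator (fun _ => (1:ℝ)) z) γ :=
    iUU.sub iUL
  have i2 : Integrable (fun z : ℝ × ℝ => {z : ℝ × ℝ | z.1 ≤ -s ∧ t < z.2}.indicator
      (fun _ => (1:ℝ)) z - {z : ℝ × ℝ | z.1 ≤ -s ∧ z.2 ≤ -t}.indicator (fun _ => (1:ℝ)) z) γ :=
    iLU.sub iLL
  calc ∫ z, eFun z.1 s * eFun z.2 t ∂γ
      = ∫ z, ({z : ℝ × ℝ | s < z.1 ∧ t < z.2}.indicator (fun _ => (1:ℝ)) z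
          - {z : ℝ × ℝ | s < z.1 ∧ z.2 ≤ -t}.indicator (fun _ => (1:ℝ)) z)
        - ({z : ℝ × ℝ | z.1 ≤ -s ∧ t < z.2}.indicator (fun _ => (1:ℝ)) z
          - {z : ℝ × ℝ | z.1 ≤ -s ∧ z.2 ≤ -t}.indicator (fun _ => (1:ℝ)) z) ∂γ := by
        exact integral_congr_ae (Filter.Eventually.of_forall hfun)
    _ = (∫ z, {z : ℝ × ℝ | s < z.1 ∧ t < z.2}.indicator (fun _ => (1:ℝ)) z
          - {z : ℝ × ℝ | s < z.1 ∧ z.2 ≤ -t}.indicator (fun _ => (1:ℝ)) z ∂γ)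
        - ∫ z, {z : ℝ × ℝ | z.1 ≤ -s ∧ t < z.2}.indicator (fun _ => (1:ℝ)) z
          - {z : ℝ × ℝ | z.1 ≤ -s ∧ z.2 ≤ -t}.indicator (fun _ => (1:ℝ)) z ∂γ :=
        integral_sub i1 i2
    _ = ((∫ z, {z : ℝ × ℝ | s < z.1 ∧ t < z.2}.indicator (fun _ => (1:ℝ)) z ∂γ)
          - ∫ z, {z : ℝ × ℝ | s < z.1 ∧ z.2 ≤ -t}.indicator (fun _ => (1:ℝ)) z ∂γ)
        - ((∫ z, {z : ℝ × ℝ | z.1 ≤ -s ∧ t < z.2}.indicator (fun _ => (1:ℝ)) z ∂γ)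
          - ∫ z, {z : ℝ × ℝ | z.1 ≤ -s ∧ z.2 ≤ -t}.indicator (fun _ => (1:ℝ)) z ∂γ) := by
        rw [integral_sub iUU iUL, integral_sub iLU iLL]
    _ = _ := by
        have hone : ∀ S : Set (ℝ × ℝ), MeasurableSet S →
            ∫ z, S.indicator (fun _ => (1:ℝ)) z ∂γ = (γ S).toReal :=
          fun S hS => integral_indicator_one hS
        rw [hone _ (mUU s t), hone _ (mUL s (-t)), hone _ (mLU (-s) t), hone _ (mLL (-s) (-t))]
        ring

end S2

section Compare
variable {γ γ' : Measure (ℝ × ℝ)} [IsProbabilityMeasure γ] [IsProbabilityMeasure γ']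

lemma marg_fst_eq (hfst : γ.map Prod.fst = γ'.map Prod.fst) (s : ℝ) :
    γ {z : ℝ × ℝ | s < z.1} = γ' {z : ℝ × ℝ | s < z.1} := by
  have h1 : γ {z : ℝ × ℝ | s < z.1} = (γ.map Prod.fst) (Ioi s) :=
    (Measure.map_apply measurable_fst measurableSet_Ioi).symm
  have h2 : γ' {z : ℝ × ℝ | s < z.1} = (γ'.map Prod.fst) (Ioi s) :=
    (Measure.map_apply measurable_fst measurableSet_Ioi).symm
  rw [h1, h2, hfst]

lemma marg_fst_eq' (hfst : γ.map Prod.fst = γ'.map Prod.fst) (s : ℝ) :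
    γ {z : ℝ × ℝ | z.1 ≤ s} = γ' {z : ℝ × ℝ | z.1 ≤ s} := by
  have h1 : γ {z : ℝ × ℝ | z.1 ≤ s} = (γ.map Prod.fst) (Iic s) :=
    (Measure.map_apply measurable_fst measurableSet_Iic).symm
  have h2 : γ' {z : ℝ × ℝ | z.1 ≤ s} = (γ'.map Prod.fst) (Iic s) :=
    (Measure.map_apply measurable_fst measurableSet_Iic).symm
  rw [h1, h2, hfst]

lemma marg_snd_eq (hsnd : γ.map Prod.snd = γ'.map Prod.snd) (t : ℝ) :
    γ {z : ℝ × ℝ | t < z.2} = γ' {z : ℝ × ℝ | t < z.2} := by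
  have h1 : γ {z : ℝ × ℝ | t < z.2} = (γ.map Prod.snd) (Ioi t) :=
    (Measure.map_apply measurable_snd measurableSet_Ioi).symm
  have h2 : γ' {z : ℝ × ℝ | t < z.2} = (γ'.map Prod.snd) (Ioi t) :=
    (Measure.map_apply measurable_snd measurableSet_Ioi).symm
  rw [h1, h2, hsnd]

lemma marg_snd_eq' (hsnd : γ.map Prod.snd = γ'.map Prod.snd) (t : ℝ) :
    γ {z : ℝ × ℝ | z.2 ≤ t} = γ' {z : ℝ × ℝ | z.2 ≤ t} := by
  have h1 : γ {z : ℝ × ℝ | z.2 ≤ t} = (γ.map Prod.snd) (Iic t) :=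
    (Measure.map_apply measurable_snd measurableSet_Iic).symm
  have h2 : γ' {z : ℝ × ℝ | z.2 ≤ t} = (γ'.map Prod.snd) (Iic t) :=
    (Measure.map_apply measurable_snd measurableSet_Iic).symm
  rw [h1, h2, hsnd]

/-- pointwise comparison of ∫ eFun * eFun for a coupling vs the comonotone coupling -/
lemma integral_eFun_mul_le
    (hfst : γ.map Prod.fst = γ'.map Prod.fst) (hsnd : γ.map Prod.snd = γ'.map Prod.snd)
    (Hmin : ∀ s t : ℝ, (γ' {z : ℝ × ℝ | s < z.1 ∧ t < z.2}).toReal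
      = min (γ' {z : ℝ × ℝ | s < z.1}).toReal (γ' {z : ℝ × ℝ | t < z.2}).toReal)
    (Hmin2 : ∀ s t : ℝ, (γ' {z : ℝ × ℝ | z.1 ≤ s ∧ z.2 ≤ t}).toReal
      = min (γ' {z : ℝ × ℝ | z.1 ≤ s}).toReal (γ' {z : ℝ × ℝ | z.2 ≤ t}).toReal)
    (s t : ℝ) :
    ∫ z, eFun z.1 s * eFun z.2 t ∂γ ≤ ∫ z, eFun z.1 s * eFun z.2 t ∂γ' := by
  rw [integral_eFun_mul γ s t, integral_eFun_mul γ' s t]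
  -- abbreviations
  have mono : ∀ (μ : Measure (ℝ × ℝ)), IsProbabilityMeasure μ → ∀ (S T : Set (ℝ × ℝ)),
      S ⊆ T → (μ S).toReal ≤ (μ T).toReal :=
    fun μ _ S T h => ENNReal.toReal_mono (measure_ne_top _ _) (measure_mono h)
  -- the four comparisons
  have hUU : (γ {z : ℝ × ℝ | s < z.1 ∧ t < z.2}).toReal
      ≤ (γ' {z : ℝ × ℝ | s < z.1 ∧ t < z.2}).toReal := by
    rw [Hmin s t, ← marg_fst_eq hfst s, ← marg_snd_eq hsnd t]
    exact le_min (mono γ ‹_› _ _ (fun z hz => hz.1)) (mono γ ‹_› _ _ (fun z hz => hz.2))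
  have hLL : ∀ a b : ℝ, (γ {z : ℝ × ℝ | z.1 ≤ a ∧ z.2 ≤ b}).toReal
      ≤ (γ' {z : ℝ × ℝ | z.1 ≤ a ∧ z.2 ≤ b}).toReal := by
    intro a b
    rw [Hmin2 a b, ← marg_fst_eq' hfst a, ← marg_snd_eq' hsnd b]
    exact le_min (mono γ ‹_› _ _ (fun z hz => hz.1)) (mono γ ‹_› _ _ (fun z hz => hz.2))
  have hUL : (γ' {z : ℝ × ℝ | s < z.1 ∧ z.2 ≤ -t}).toReal
      ≤ (γ {z : ℝ × ℝ | s < z.1 ∧ z.2 ≤ -t}).toReal := by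
    have h1 := split_UL_LL γ s (-t)
    have h2 := split_UL_LL γ' s (-t)
    have h3 := hLL s (-t)
    have h4 := marg_snd_eq' hsnd (-t)
    rw [h4] at h1
    linarith
  have hLU : (γ' {z : ℝ × ℝ | z.1 ≤ -s ∧ t < z.2}).toReal
      ≤ (γ {z : ℝ × ℝ | z.1 ≤ -s ∧ t < z.2}).toReal := by
    have h1 := split_LU_LL γ (-s) t
    have h2 := split_LU_LL γ' (-s) t
    have h3 := hLL (-s) t
    have h4 := marg_fst_eq' hfst (-s)
    rw [h4] at h1
    linarith
  linarith [hLL (-s) (-t)]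

end Compare


section Fubini

/-- product of Lebesgue measures restricted to positive half-lines -/
noncomputable def Pmeas : Measure (ℝ × ℝ) :=
  (volume.restrict (Ioi (0:ℝ))).prod (volume.restrict (Ioi (0:ℝ)))

instance : SFinite Pmeas := by unfold Pmeas; infer_instance

lemma measurable_F : Measurable (fun w : (ℝ × ℝ) × (ℝ × ℝ) => eFun w.1.1 w.2.1 * eFun w.1.2 w.2.2) := by
  have h1 : Measurable (fun w : (ℝ × ℝ) × (ℝ × ℝ) => eFun w.1.1 w.2.1) :=
    measurable_eFun.comp ((measurable_fst.fst).prodMk (measurable_snd.fst))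
  have h2 : Measurable (fun w : (ℝ × ℝ) × (ℝ × ℝ) => eFun w.1.2 w.2.2) :=
    measurable_eFun.comp ((measurable_fst.snd).prodMk (measurable_snd.snd))
  exact h1.mul h2

lemma integrable_F (γ : Measure (ℝ × ℝ)) [IsProbabilityMeasure γ]
    (hx : Integrable (fun z : ℝ × ℝ => z.1 ^ 2) γ)
    (hy : Integrable (fun z : ℝ × ℝ => z.2 ^ 2) γ) :
    Integrable (fun w : (ℝ × ℝ) × (ℝ × ℝ) => eFun w.1.1 w.2.1 * eFun w.1.2 w.2.2)
      (γ.prod Pmeas) := by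
  rw [integrable_prod_iff (measurable_F.aestronglyMeasurable)]
  constructor
  · refine Filter.Eventually.of_forall (fun z => ?_)
    exact (integrable_eFun z.1).mul_prod (integrable_eFun z.2)
  · have hval : ∀ z : ℝ × ℝ, (∫ st, ‖eFun z.1 st.1 * eFun z.2 st.2‖ ∂Pmeas) = |z.1| * |z.2| := by
      intro z
      have : ∀ st : ℝ × ℝ, ‖eFun z.1 st.1 * eFun z.2 st.2‖ = |eFun z.1 st.1| * |eFun z.2 st.2| := by
        intro st
        rw [Real.norm_eq_abs, abs_mul]
      rw [integral_congr_ae (Filter.Eventually.of_forall this)]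
      unfold Pmeas
      rw [integral_prod_mul (fun s => |eFun z.1 s|) (fun t => |eFun z.2 t|)]
      rw [integral_abs_eFun, integral_abs_eFun]
    rw [integrable_congr (Filter.Eventually.of_forall hval)]
    have hmeas : AEStronglyMeasurable (fun z : ℝ × ℝ => |z.1| * |z.2|) γ :=
      ((measurable_fst.abs).mul (measurable_snd.abs)).aestronglyMeasurable
    refine Integrable.mono (((hx.add hy).const_mul (1/2 : ℝ))) hmeas ?_
    refine Filter.Eventually.of_forall (fun z => ?_)
    simp only [Pi.add_apply, Real.norm_eq_abs]
    rw [abs_of_nonneg (show (0:ℝ) ≤ |z.1| * |z.2| by positivity),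
      abs_of_nonneg (show (0:ℝ) ≤ 1/2 * (z.1 ^ 2 + z.2 ^ 2) by positivity)]
    nlinarith [sq_nonneg (|z.1| - |z.2|), sq_abs z.1, sq_abs z.2]

lemma integral_mul_eq_integral_eFun (γ : Measure (ℝ × ℝ)) [IsProbabilityMeasure γ]
    (hx : Integrable (fun z : ℝ × ℝ => z.1 ^ 2) γ)
    (hy : Integrable (fun z : ℝ × ℝ => z.2 ^ 2) γ) :
    ∫ z, z.1 * z.2 ∂γ = ∫ st, (∫ z, eFun z.1 st.1 * eFun z.2 st.2 ∂γ) ∂Pmeas := by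
  have hF := integrable_F γ hx hy
  have key : ∀ z : ℝ × ℝ, z.1 * z.2 = ∫ st, eFun z.1 st.1 * eFun z.2 st.2 ∂Pmeas := by
    intro z
    unfold Pmeas
    rw [integral_prod_mul (fun s => eFun z.1 s) (fun t => eFun z.2 t),
      integral_eFun, integral_eFun]
  calc ∫ z, z.1 * z.2 ∂γ = ∫ z, (∫ st, eFun z.1 st.1 * eFun z.2 st.2 ∂Pmeas) ∂γ :=
        integral_congr_ae (Filter.Eventually.of_forall key)
    _ = ∫ st, (∫ z, eFun z.1 st.1 * eFun z.2 st.2 ∂γ) ∂Pmeas :=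
        integral_integral_swap (f := fun (z : ℝ × ℝ) (st : ℝ × ℝ) => eFun z.1 st.1 * eFun z.2 st.2) hF

lemma integrable_inner_eFun (γ : Measure (ℝ × ℝ)) [IsProbabilityMeasure γ]
    (hx : Integrable (fun z : ℝ × ℝ => z.1 ^ 2) γ)
    (hy : Integrable (fun z : ℝ × ℝ => z.2 ^ 2) γ) :
    Integrable (fun st : ℝ × ℝ => ∫ z, eFun z.1 st.1 * eFun z.2 st.2 ∂γ) Pmeas :=
  (integrable_F γ hx hy).integral_prod_right

end Fubini


section Density

lemma nu_eq : gaussianReal 0 1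
    = volume.withDensity (fun x => ((gaussianPDFReal 0 1 x).toNNReal : ℝ≥0∞)) :=
  gaussianReal_of_var_ne_zero 0 one_ne_zero

lemma integral_nu (g : ℝ → ℝ) :
    ∫ x, g x ∂(gaussianReal 0 1) = ∫ x, gaussianPDFReal 0 1 x * g x := by
  rw [nu_eq, integral_withDensity_eq_integral_smul
    ((measurable_gaussianPDFReal 0 1).real_toNNReal) g]
  congr 1
  ext x
  rw [NNReal.smul_def, smul_eq_mul, Real.coe_toNNReal _ (gaussianPDFReal_nonneg 0 1 x)]

lemma integrable_nu_iff (g : ℝ → ℝ) (hg : Measurable g) :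
    Integrable g (gaussianReal 0 1) ↔
      Integrable (fun x => gaussianPDFReal 0 1 x * g x) volume := by
  rw [nu_eq, integrable_withDensity_iff ((measurable_gaussianPDFReal 0 1).real_toNNReal.coe_nnreal_ennreal)
    (Filter.Eventually.of_forall (fun x => ENNReal.coe_lt_top))]
  constructor
  · intro h
    refine h.congr (Filter.Eventually.of_forall (fun x => ?_))
    beta_reduce
    rw [ENNReal.coe_toReal, Real.coe_toNNReal _ (gaussianPDFReal_nonneg 0 1 x), mul_comm]
  · intro h
    refine h.congr (Filter.Eventually.of_forall (fun x => ?_))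
    beta_reduce
    rw [ENNReal.coe_toReal, Real.coe_toNNReal _ (gaussianPDFReal_nonneg 0 1 x), mul_comm]

lemma phi_eq (x : ℝ) :
    gaussianPDFReal 0 1 x = (Real.sqrt (2*π))⁻¹ * rexp (-(1/2) * x^2) := by
  simp only [gaussianPDFReal, NNReal.coe_one, mul_one, sub_zero]
  congr 1
  ring

end Density


section GaussInt

lemma integrable_E : Integrable (fun x : ℝ => rexp (-(1/2) * x^2)) :=
  integrable_exp_neg_mul_sq (by norm_num)

lemma integrable_xE : Integrable (fun x : ℝ => x * rexp (-(1/2) * x^2)) :=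
  integrable_mul_exp_neg_mul_sq (by norm_num)

lemma integrable_x2E : Integrable (fun x : ℝ => x^2 * rexp (-(1/2) * x^2)) := by
  have h := integrable_rpow_mul_exp_neg_mul_sq (by norm_num : (0:ℝ) < 1/2)
    (by norm_num : (-1:ℝ) < 2)
  refine h.congr (Filter.Eventually.of_forall (fun x => ?_))
  beta_reduce
  rw [show ((2:ℝ)) = ((2:ℕ):ℝ) by norm_num]
  rw [Real.rpow_natCast]

lemma E0_full : ∫ x : ℝ, rexp (-(1/2) * x^2) = Real.sqrt (2*π) := by
  rw [integral_gaussian]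
  congr 1
  rw [div_div_eq_mul_div]
  ring

lemma E0p : ∫ x in Ioi (0:ℝ), rexp (-(1/2) * x^2) = Real.sqrt (2*π) / 2 := by
  rw [integral_gaussian_Ioi]
  congr 1
  rw [div_div_eq_mul_div]
  ring

lemma E0m : ∫ x in Iic (0:ℝ), rexp (-(1/2) * x^2) = Real.sqrt (2*π) / 2 := by
  have h := integral_comp_neg_Ioi (c := 0) (f := fun x : ℝ => rexp (-(1/2) * x^2))
  simp only [neg_zero, neg_sq] at h
  rw [← h, E0p]

lemma E1p : ∫ x in Ioi (0:ℝ), x * rexp (-(1/2) * x^2) = 1 := by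
  have hderiv : ∀ x ∈ Ici (0:ℝ), HasDerivAt (fun y : ℝ => -rexp (-(1/2) * y^2))
      (x * rexp (-(1/2) * x^2)) x := by
    intro x _
    have h1 : HasDerivAt (fun y : ℝ => -(1/2) * y^2) (-x) x := by
      have := (hasDerivAt_pow 2 x).const_mul (-(1/2) : ℝ)
      refine this.congr_deriv ?_
      norm_num
      ring
    have h2 := (h1.exp).neg
    exact h2.congr_deriv (by ring)
  have hint : IntegrableOn (fun x : ℝ => x * rexp (-(1/2) * x^2)) (Ioi 0) :=
    integrable_xE.integrableOn
  have htend : Tendsto (fun y : ℝ => -rexp (-(1/2) * y^2)) atTop (nhds 0) := by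
    rw [show (0:ℝ) = -0 by norm_num]
    refine Tendsto.neg ?_
    apply Real.tendsto_exp_atBot.comp
    have h2 : Tendsto (fun y : ℝ => y^2) atTop atTop := tendsto_pow_atTop two_ne_zero
    have := h2.const_mul_atTop_of_neg (show (-(1/2):ℝ) < 0 by norm_num)
    exact this
  have := integral_Ioi_of_hasDerivAt_of_tendsto' hderiv hint htend
  rw [this]
  norm_num

lemma E1m : ∫ x in Iic (0:ℝ), x * rexp (-(1/2) * x^2) = -1 := by
  have h := integral_comp_neg_Ioi (c := 0) (f := fun x : ℝ => x * rexp (-(1/2) * x^2))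
  simp only [neg_zero, neg_sq] at h
  rw [← h]
  have : ∀ x : ℝ, -x * rexp (-(1/2) * x^2) = -(x * rexp (-(1/2) * x^2)) := fun x => by ring
  simp only [this]
  rw [integral_neg, E1p]

lemma E2p : ∫ x in Ioi (0:ℝ), x^2 * rexp (-(1/2) * x^2) = Real.sqrt (2*π) / 2 := by
  have hderiv : ∀ x ∈ Ici (0:ℝ), HasDerivAt (fun y : ℝ => -(y * rexp (-(1/2) * y^2)))
      (x^2 * rexp (-(1/2) * x^2) - rexp (-(1/2) * x^2)) x := by
    intro x _
    have h1 : HasDerivAt (fun y : ℝ => -(1/2) * y^2) (-x) x := by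
      have := (hasDerivAt_pow 2 x).const_mul (-(1/2) : ℝ)
      refine this.congr_deriv ?_
      norm_num
      ring
    have h2 := ((hasDerivAt_id x).mul h1.exp).neg
    exact h2.congr_deriv (by simp only [id_eq]; ring)
  have hint : IntegrableOn (fun x : ℝ => x^2 * rexp (-(1/2) * x^2) - rexp (-(1/2) * x^2))
      (Ioi 0) := (integrable_x2E.sub integrable_E).integrableOn
  have htend : Tendsto (fun y : ℝ => -(y * rexp (-(1/2) * y^2))) atTop (nhds 0) := by
    rw [show (0:ℝ) = -0 by norm_num]
    refine Tendsto.neg ?_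
    have hbase : Tendsto (fun y : ℝ => y * rexp (-y)) atTop (nhds 0) := by
      have := Real.tendsto_pow_mul_exp_neg_atTop_nhds_zero 1
      simpa using this
    refine squeeze_zero' ?_ ?_ hbase
    · filter_upwards [Filter.eventually_ge_atTop (0:ℝ)] with y hy
      positivity
    · filter_upwards [Filter.eventually_ge_atTop (2:ℝ)] with y hy
      have h1 : -(1/2) * y^2 ≤ -y := by nlinarith
      exact mul_le_mul_of_nonneg_left (Real.exp_le_exp.mpr h1) (by linarith)
  have h := integral_Ioi_of_hasDerivAt_of_tendsto' hderiv hint htend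
  have hsplit : ∫ x in Ioi (0:ℝ), (x^2 * rexp (-(1/2) * x^2) - rexp (-(1/2) * x^2))
      = (∫ x in Ioi (0:ℝ), x^2 * rexp (-(1/2) * x^2)) - ∫ x in Ioi (0:ℝ), rexp (-(1/2) * x^2) :=
    integral_sub integrable_x2E.integrableOn integrable_E.integrableOn
  rw [hsplit] at h
  rw [E0p] at h
  simp only [zero_mul, neg_zero, sub_zero] at h
  linarith

lemma E2m : ∫ x in Iic (0:ℝ), x^2 * rexp (-(1/2) * x^2) = Real.sqrt (2*π) / 2 := by
  have h := integral_comp_neg_Ioi (c := 0) (f := fun x : ℝ => x^2 * rexp (-(1/2) * x^2))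
  simp only [neg_zero, neg_sq] at h
  rw [← h, E2p]

end GaussInt


section PW

noncomputable def pw (a b m : ℝ) (x : ℝ) : ℝ := if x ≤ 0 then a * x + m else b * x + m

noncomputable def pwInv (a b m : ℝ) (s : ℝ) : ℝ := if s ≤ m then (s - m) / a else (s - m) / b

lemma measurable_pw (a b m : ℝ) : Measurable (pw a b m) := by
  unfold pw
  exact Measurable.ite measurableSet_Iic ((measurable_id.const_mul a).add_const m)
    ((measurable_id.const_mul b).add_const m)

lemma pw_le_iff {a b : ℝ} (ha : 0 < a) (hb : 0 < b) (m x s : ℝ) :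
    pw a b m x ≤ s ↔ x ≤ pwInv a b m s := by
  unfold pw pwInv
  split_ifs with h1 h2 h2
  · rw [le_div_iff₀ ha]
    constructor <;> intro h <;> nlinarith
  · have hpos : 0 < (s - m) / b := div_pos (by linarith [not_le.mp h2]) hb
    exact iff_of_true (by nlinarith) (by linarith)
  · have hx : 0 < x := not_le.mp h1
    have hnp : (s - m) / a ≤ 0 := div_nonpos_iff.mpr (Or.inr ⟨by linarith, ha.le⟩)
    exact iff_of_false (not_le.mpr (by nlinarith)) (not_le.mpr (by linarith))
  · rw [le_div_iff₀ hb]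
    constructor <;> intro h <;> nlinarith

lemma pw_lt_iff {a b : ℝ} (ha : 0 < a) (hb : 0 < b) (m x s : ℝ) :
    s < pw a b m x ↔ pwInv a b m s < x :=
  lt_iff_lt_of_le_iff_le (pw_le_iff ha hb m x s)

lemma pw_sq_le {a b : ℝ} (ha : 0 < a) (hb : 0 < b) (m x : ℝ) :
    (pw a b m x)^2 ≤ 2*(a+b)^2*x^2 + 2*m^2 := by
  unfold pw
  split_ifs with h1
  · nlinarith [sq_nonneg (a*x - m), sq_nonneg x, mul_pos ha hb, sq_nonneg (b*x)]
  · nlinarith [sq_nonneg (b*x - m), sq_nonneg x, mul_pos ha hb, sq_nonneg (a*x)]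

lemma integrable_pw_sq {a b : ℝ} (ha : 0 < a) (hb : 0 < b) (m : ℝ) :
    Integrable (fun x => (pw a b m x)^2) (gaussianReal 0 1) := by
  rw [integrable_nu_iff _ ((measurable_pw a b m).pow_const 2)]
  have hmaj : Integrable (fun x => gaussianPDFReal 0 1 x * (2*(a+b)^2*x^2 + 2*m^2)) volume := by
    have heq : (fun x => gaussianPDFReal 0 1 x * (2*(a+b)^2*x^2 + 2*m^2))
        = fun x => (Real.sqrt (2*π))⁻¹ * (2*(a+b)^2 * (x^2 * rexp (-(1/2) * x^2))
            + 2*m^2 * rexp (-(1/2) * x^2)) := by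
      ext x
      rw [phi_eq]
      ring
    rw [heq]
    exact ((integrable_x2E.const_mul _).add (integrable_E.const_mul _)).const_mul _
  refine hmaj.mono (((measurable_gaussianPDFReal 0 1).mul
    ((measurable_pw a b m).pow_const 2)).aestronglyMeasurable) ?_
  refine Filter.Eventually.of_forall (fun x => ?_)
  rw [Real.norm_eq_abs, Real.norm_eq_abs,
    abs_of_nonneg (mul_nonneg (gaussianPDFReal_nonneg 0 1 x) (sq_nonneg _)),
    abs_of_nonneg (mul_nonneg (gaussianPDFReal_nonneg 0 1 x)
      (by nlinarith [sq_nonneg x, sq_nonneg m, sq_nonneg (a+b)]))]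
  exact mul_le_mul_of_nonneg_left (pw_sq_le ha hb m x) (gaussianPDFReal_nonneg 0 1 x)

end PW

section MinMeas

lemma meas_Ioi_max (μ : Measure ℝ) [IsFiniteMeasure μ] (a b : ℝ) :
    (μ (Ioi (max a b))).toReal = min (μ (Ioi a)).toReal (μ (Ioi b)).toReal := by
  rcases le_total a b with h | h
  · rw [max_eq_right h, min_eq_right
      (ENNReal.toReal_mono (measure_ne_top _ _) (measure_mono (Ioi_subset_Ioi h)))]
  · rw [max_eq_left h, min_eq_left
      (ENNReal.toReal_mono (measure_ne_top _ _) (measure_mono (Ioi_subset_Ioi h)))]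

lemma meas_Iic_min (μ : Measure ℝ) [IsFiniteMeasure μ] (a b : ℝ) :
    (μ (Iic (min a b))).toReal = min (μ (Iic a)).toReal (μ (Iic b)).toReal := by
  rcases le_total a b with h | h
  · rw [min_eq_left h, min_eq_left
      (ENNReal.toReal_mono (measure_ne_top _ _) (measure_mono (Iic_subset_Iic.mpr h)))]
  · rw [min_eq_right h, min_eq_right
      (ENNReal.toReal_mono (measure_ne_top _ _) (measure_mono (Iic_subset_Iic.mpr h)))]

end MinMeas

section Cost

lemma integrable_fst_mul_snd (γ : Measure (ℝ × ℝ)) [IsProbabilityMeasure γ]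
    (hx : Integrable (fun z : ℝ × ℝ => z.1 ^ 2) γ)
    (hy : Integrable (fun z : ℝ × ℝ => z.2 ^ 2) γ) :
    Integrable (fun z : ℝ × ℝ => z.1 * z.2) γ := by
  refine Integrable.mono ((hx.add hy).const_mul (1/2 : ℝ))
    ((measurable_fst.mul measurable_snd).aestronglyMeasurable) ?_
  refine Filter.Eventually.of_forall (fun z => ?_)
  simp only [Pi.add_apply, Real.norm_eq_abs]
  rw [abs_mul, abs_of_nonneg (show (0:ℝ) ≤ 1/2 * (z.1 ^ 2 + z.2 ^ 2) by positivity)]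
  nlinarith [sq_nonneg (|z.1| - |z.2|), sq_abs z.1, sq_abs z.2]

lemma cost_expand (γ : Measure (ℝ × ℝ)) [IsProbabilityMeasure γ]
    (hx : Integrable (fun z : ℝ × ℝ => z.1 ^ 2) γ)
    (hy : Integrable (fun z : ℝ × ℝ => z.2 ^ 2) γ) :
    ∫ z, ‖z.1 - z.2‖ ^ 2 ∂γ
      = (∫ z, z.1 ^ 2 ∂γ) - 2 * (∫ z, z.1 * z.2 ∂γ) + ∫ z, z.2 ^ 2 ∂γ := by
  have hxy := integrable_fst_mul_snd γ hx hy
  have hfun : ∀ z : ℝ × ℝ, ‖z.1 - z.2‖ ^ 2 = z.1 ^ 2 - 2 * (z.1 * z.2) + z.2 ^ 2 := by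
    intro z
    rw [Real.norm_eq_abs, sq_abs]
    ring
  rw [integral_congr_ae (Filter.Eventually.of_forall hfun)]
  have h1 : Integrable (fun z : ℝ × ℝ => z.1 ^ 2 - 2 * (z.1 * z.2)) γ := hx.sub (hxy.const_mul 2)
  rw [integral_add h1 hy, integral_sub hx (hxy.const_mul 2), integral_const_mul]

end Cost

section GaussCost

lemma gauss_cost_integral (c₁ c₂ d : ℝ) :
    ∫ x, gaussianPDFReal 0 1 x * (if x ≤ 0 then c₁*x + d else c₂*x + d)^2
      = d^2 + (1/2)*c₁^2 + (1/2)*c₂^2 + (Real.sqrt (2*π))⁻¹ * d * (2*c₂ - 2*c₁) := by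
  set A := (Real.sqrt (2*π))⁻¹ with hA
  have hg1 : Integrable (fun x : ℝ => A * (c₁^2 * (x^2 * rexp (-(1/2) * x^2))
      + (2*c₁*d) * (x * rexp (-(1/2) * x^2)) + d^2 * rexp (-(1/2) * x^2))) volume :=
    (((integrable_x2E.const_mul _).add (integrable_xE.const_mul _)).add
      (integrable_E.const_mul _)).const_mul _
  have hg2 : Integrable (fun x : ℝ => A * (c₂^2 * (x^2 * rexp (-(1/2) * x^2))
      + (2*c₂*d) * (x * rexp (-(1/2) * x^2)) + d^2 * rexp (-(1/2) * x^2))) volume :=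
    (((integrable_x2E.const_mul _).add (integrable_xE.const_mul _)).add
      (integrable_E.const_mul _)).const_mul _
  set f := fun x : ℝ => gaussianPDFReal 0 1 x * (if x ≤ 0 then c₁*x + d else c₂*x + d)^2 with hf
  have heq1 : EqOn f (fun x : ℝ => A * (c₁^2 * (x^2 * rexp (-(1/2) * x^2))
      + (2*c₁*d) * (x * rexp (-(1/2) * x^2)) + d^2 * rexp (-(1/2) * x^2))) (Iic 0) := by
    intro x hx
    simp only [hf, phi_eq, if_pos (mem_Iic.mp hx)]
    ring
  have heq2 : EqOn f (fun x : ℝ => A * (c₂^2 * (x^2 * rexp (-(1/2) * x^2))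
      + (2*c₂*d) * (x * rexp (-(1/2) * x^2)) + d^2 * rexp (-(1/2) * x^2))) (Ioi 0) := by
    intro x hx
    simp only [hf, phi_eq, if_neg (not_le.mpr (mem_Ioi.mp hx))]
    ring
  have hint1 : IntegrableOn f (Iic 0) volume :=
    (hg1.integrableOn).congr_fun (fun x hx => (heq1 hx).symm) measurableSet_Iic
  have hint2 : IntegrableOn f (Ioi 0) volume :=
    (hg2.integrableOn).congr_fun (fun x hx => (heq2 hx).symm) measurableSet_Ioi
  have hint : Integrable f volume := by
    rw [← integrableOn_univ, ← Iic_union_Ioi (a := (0:ℝ))]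
    exact hint1.union hint2
  have hsplit : ∫ x, f x = (∫ x in Iic (0:ℝ), f x) + ∫ x in Ioi (0:ℝ), f x := by
    rw [← compl_Iic]
    exact (integral_add_compl measurableSet_Iic hint).symm
  have hIic : ∫ x in Iic (0:ℝ), f x
      = A * (c₁^2 * (Real.sqrt (2*π)/2) + (2*c₁*d) * (-1) + d^2 * (Real.sqrt (2*π)/2)) := by
    rw [setIntegral_congr_fun measurableSet_Iic heq1, integral_const_mul]
    have i2 : IntegrableOn (fun x : ℝ => c₁^2 * (x^2 * rexp (-(1/2) * x^2))) (Iic 0) volume :=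
      (integrable_x2E.const_mul _).integrableOn
    have i1 : IntegrableOn (fun x : ℝ => (2*c₁*d) * (x * rexp (-(1/2) * x^2))) (Iic 0) volume :=
      (integrable_xE.const_mul _).integrableOn
    have i0 : IntegrableOn (fun x : ℝ => d^2 * rexp (-(1/2) * x^2)) (Iic 0) volume :=
      (integrable_E.const_mul _).integrableOn
    have i21 : IntegrableOn (fun x : ℝ => c₁^2 * (x^2 * rexp (-(1/2) * x^2))
        + (2*c₁*d) * (x * rexp (-(1/2) * x^2))) (Iic 0) volume := i2.add i1
    rw [integral_add i21 i0, integral_add i2 i1,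
      integral_const_mul, integral_const_mul, integral_const_mul, E2m, E1m, E0m]
  have hIoi : ∫ x in Ioi (0:ℝ), f x
      = A * (c₂^2 * (Real.sqrt (2*π)/2) + (2*c₂*d) * 1 + d^2 * (Real.sqrt (2*π)/2)) := by
    rw [setIntegral_congr_fun measurableSet_Ioi heq2, integral_const_mul]
    have i2 : IntegrableOn (fun x : ℝ => c₂^2 * (x^2 * rexp (-(1/2) * x^2))) (Ioi 0) volume :=
      (integrable_x2E.const_mul _).integrableOn
    have i1 : IntegrableOn (fun x : ℝ => (2*c₂*d) * (x * rexp (-(1/2) * x^2))) (Ioi 0) volume :=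
      (integrable_xE.const_mul _).integrableOn
    have i0 : IntegrableOn (fun x : ℝ => d^2 * rexp (-(1/2) * x^2)) (Ioi 0) volume :=
      (integrable_E.const_mul _).integrableOn
    have i21 : IntegrableOn (fun x : ℝ => c₂^2 * (x^2 * rexp (-(1/2) * x^2))
        + (2*c₂*d) * (x * rexp (-(1/2) * x^2))) (Ioi 0) volume := i2.add i1
    rw [integral_add i21 i0, integral_add i2 i1,
      integral_const_mul, integral_const_mul, integral_const_mul, E2p, E1p, E0p]
  rw [hsplit, hIic, hIoi, hA]
  have hS : Real.sqrt (2*π) ≠ 0 := ne_of_gt (Real.sqrt_pos.mpr (by positivity))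
  field_simp
  ring

lemma sqrt_two_div_pi : Real.sqrt (2/π) = 2 * (Real.sqrt (2*π))⁻¹ := by
  have hπ : (0:ℝ) < π := Real.pi_pos
  rw [show (2:ℝ)/π = 4/(2*π) by field_simp; ring]
  rw [Real.sqrt_div (by norm_num : (0:ℝ) ≤ 4)]
  rw [show (4:ℝ) = 2^2 by norm_num, Real.sqrt_sq (by norm_num : (0:ℝ) ≤ 2)]
  rw [div_eq_mul_inv]

end GaussCost

/-- Squared 2-Wasserstein distance between two measures on a normed space `E`:
the infimum over all couplings `γ` of `p` and `q` of `∫ ‖x - y‖² dγ(x, y)`. -/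
noncomputable def W2sq {E : Type*} [NormedAddCommGroup E] [MeasurableSpace E]
    (p q : Measure E) : ℝ :=
  sInf { c | ∃ γ : Measure (E × E), IsProbabilityMeasure γ ∧
    γ.map Prod.fst = p ∧ γ.map Prod.snd = q ∧ c = ∫ z, ‖z.1 - z.2‖ ^ 2 ∂γ }

/-- Squared 2-Wasserstein distance between pushforwards of the standard Gaussian measure
under two piecewise linear (two-piece) maps. -/
theorem W2sq_piecewise_pushforward_gaussian (μ₁ μ₂ σ₁ σ₂ σ₃ σ₄ : ℝ)
    (hσ₁ : 0 < σ₁) (hσ₂ : 0 < σ₂) (hσ₃ : 0 < σ₃) (hσ₄ : 0 < σ₄) :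
    W2sq
      ((gaussianReal 0 1).map
        fun x => if x ≤ 0 then σ₁ * x + μ₁ else σ₂ * x + μ₁)
      ((gaussianReal 0 1).map
        fun x => if x ≤ 0 then σ₃ * x + μ₂ else σ₄ * x + μ₂) =
      (μ₁ - μ₂) ^ 2 + (1 / 2) * (σ₁ - σ₃) ^ 2 + (1 / 2) * (σ₂ - σ₄) ^ 2
        + Real.sqrt (2 / Real.pi) * (μ₁ - μ₂) * (σ₂ - σ₁ + σ₃ - σ₄) := by
  have hpw1 : (fun x : ℝ => if x ≤ 0 then σ₁ * x + μ₁ else σ₂ * x + μ₁) = pw σ₁ σ₂ μ₁ := rfl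
  have hpw2 : (fun x : ℝ => if x ≤ 0 then σ₃ * x + μ₂ else σ₄ * x + μ₂) = pw σ₃ σ₄ μ₂ := rfl
  rw [hpw1, hpw2]
  set ν : Measure ℝ := gaussianReal 0 1 with hν
  set f₁ : ℝ → ℝ := pw σ₁ σ₂ μ₁ with hf₁
  set f₂ : ℝ → ℝ := pw σ₃ σ₄ μ₂ with hf₂
  have hm1 : Measurable f₁ := measurable_pw _ _ _
  have hm2 : Measurable f₂ := measurable_pw _ _ _
  have hmpair : Measurable (fun x => (f₁ x, f₂ x)) := hm1.prodMk hm2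
  set γstar : Measure (ℝ × ℝ) := ν.map (fun x => (f₁ x, f₂ x)) with hγstar
  haveI hps : IsProbabilityMeasure γstar := Measure.isProbabilityMeasure_map hmpair.aemeasurable
  have hfstar : γstar.map Prod.fst = ν.map f₁ := by
    rw [hγstar, Measure.map_map measurable_fst hmpair]
    rfl
  have hsstar : γstar.map Prod.snd = ν.map f₂ := by
    rw [hγstar, Measure.map_map measurable_snd hmpair]
    rfl
  have hmy : Measurable (fun y : ℝ => y ^ 2) := measurable_id.pow_const 2
  have hpsq : Integrable (fun x => (f₁ x) ^ 2) ν := integrable_pw_sq hσ₁ hσ₂ μ₁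
  have hqsq : Integrable (fun x => (f₂ x) ^ 2) ν := integrable_pw_sq hσ₃ hσ₄ μ₂
  have hxstar : Integrable (fun z : ℝ × ℝ => z.1 ^ 2) γstar := by
    rw [hγstar, integrable_map_measure ((measurable_fst.pow_const 2).aestronglyMeasurable)
      hmpair.aemeasurable]
    exact hpsq
  have hystar : Integrable (fun z : ℝ × ℝ => z.2 ^ 2) γstar := by
    rw [hγstar, integrable_map_measure ((measurable_snd.pow_const 2).aestronglyMeasurable)
      hmpair.aemeasurable]
    exact hqsq
  -- comonotonicity of γstar
  have hUU : ∀ s t : ℝ, (γstar {z : ℝ × ℝ | s < z.1 ∧ t < z.2}).toReal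
      = min (γstar {z : ℝ × ℝ | s < z.1}).toReal (γstar {z : ℝ × ℝ | t < z.2}).toReal := by
    intro s t
    have h1 : γstar {z : ℝ × ℝ | s < z.1 ∧ t < z.2}
        = ν (Ioi (max (pwInv σ₁ σ₂ μ₁ s) (pwInv σ₃ σ₄ μ₂ t))) := by
      rw [hγstar, Measure.map_apply hmpair (mUU s t)]
      congr 1
      ext x
      simp only [mem_preimage, mem_setOf_eq, mem_Ioi, max_lt_iff]
      rw [hf₁, hf₂, pw_lt_iff hσ₁ hσ₂, pw_lt_iff hσ₃ hσ₄]
    have h2 : γstar {z : ℝ × ℝ | s < z.1} = ν (Ioi (pwInv σ₁ σ₂ μ₁ s)) := by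
      have hmset : MeasurableSet {z : ℝ × ℝ | s < z.1} := measurable_fst measurableSet_Ioi
      rw [hγstar, Measure.map_apply hmpair hmset]
      congr 1
      ext x
      simp only [mem_preimage, mem_setOf_eq, mem_Ioi]
      rw [hf₁, pw_lt_iff hσ₁ hσ₂]
    have h3 : γstar {z : ℝ × ℝ | t < z.2} = ν (Ioi (pwInv σ₃ σ₄ μ₂ t)) := by
      have hmset : MeasurableSet {z : ℝ × ℝ | t < z.2} := measurable_snd measurableSet_Ioi
      rw [hγstar, Measure.map_apply hmpair hmset]
      congr 1
      ext x
      simp only [mem_preimage, mem_setOf_eq, mem_Ioi]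
      rw [hf₂, pw_lt_iff hσ₃ hσ₄]
    rw [h1, h2, h3, meas_Ioi_max]
  have hLL : ∀ s t : ℝ, (γstar {z : ℝ × ℝ | z.1 ≤ s ∧ z.2 ≤ t}).toReal
      = min (γstar {z : ℝ × ℝ | z.1 ≤ s}).toReal (γstar {z : ℝ × ℝ | z.2 ≤ t}).toReal := by
    intro s t
    have h1 : γstar {z : ℝ × ℝ | z.1 ≤ s ∧ z.2 ≤ t}
        = ν (Iic (min (pwInv σ₁ σ₂ μ₁ s) (pwInv σ₃ σ₄ μ₂ t))) := by
      rw [hγstar, Measure.map_apply hmpair (mLL s t)]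
      congr 1
      ext x
      simp only [mem_preimage, mem_setOf_eq, mem_Iic, le_min_iff]
      rw [hf₁, hf₂, pw_le_iff hσ₁ hσ₂, pw_le_iff hσ₃ hσ₄]
    have h2 : γstar {z : ℝ × ℝ | z.1 ≤ s} = ν (Iic (pwInv σ₁ σ₂ μ₁ s)) := by
      have hmset : MeasurableSet {z : ℝ × ℝ | z.1 ≤ s} := measurable_fst measurableSet_Iic
      rw [hγstar, Measure.map_apply hmpair hmset]
      congr 1
      ext x
      simp only [mem_preimage, mem_setOf_eq, mem_Iic]
      rw [hf₁, pw_le_iff hσ₁ hσ₂]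
    have h3 : γstar {z : ℝ × ℝ | z.2 ≤ t} = ν (Iic (pwInv σ₃ σ₄ μ₂ t)) := by
      have hmset : MeasurableSet {z : ℝ × ℝ | z.2 ≤ t} := measurable_snd measurableSet_Iic
      rw [hγstar, Measure.map_apply hmpair hmset]
      congr 1
      ext x
      simp only [mem_preimage, mem_setOf_eq, mem_Iic]
      rw [hf₂, pw_le_iff hσ₃ hσ₄]
    rw [h1, h2, h3, meas_Iic_min]
  -- cost of γstar
  have hcost_star : ∫ z, ‖z.1 - z.2‖ ^ 2 ∂γstar
      = (μ₁ - μ₂) ^ 2 + (1 / 2) * (σ₁ - σ₃) ^ 2 + (1 / 2) * (σ₂ - σ₄) ^ 2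
        + Real.sqrt (2 / Real.pi) * (μ₁ - μ₂) * (σ₂ - σ₁ + σ₃ - σ₄) := by
    rw [hγstar, integral_map (f := fun z : ℝ × ℝ => ‖z.1 - z.2‖ ^ 2) hmpair.aemeasurable
      (((measurable_fst.sub measurable_snd).norm.pow_const 2).aestronglyMeasurable)]
    have hdiff : ∀ x : ℝ, ‖f₁ x - f₂ x‖ ^ 2
        = (if x ≤ 0 then (σ₁ - σ₃) * x + (μ₁ - μ₂) else (σ₂ - σ₄) * x + (μ₁ - μ₂)) ^ 2 := by
      intro x
      rw [Real.norm_eq_abs, sq_abs, hf₁, hf₂]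
      unfold pw
      split_ifs with h <;> ring
    rw [integral_congr_ae (Filter.Eventually.of_forall hdiff), hν, integral_nu,
      gauss_cost_integral, sqrt_two_div_pi]
    ring
  -- conclusion
  have key : IsLeast { c | ∃ γ : Measure (ℝ × ℝ), IsProbabilityMeasure γ ∧
      γ.map Prod.fst = ν.map f₁ ∧ γ.map Prod.snd = ν.map f₂ ∧
      c = ∫ z, ‖z.1 - z.2‖ ^ 2 ∂γ }
      ((μ₁ - μ₂) ^ 2 + (1 / 2) * (σ₁ - σ₃) ^ 2 + (1 / 2) * (σ₂ - σ₄) ^ 2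
        + Real.sqrt (2 / Real.pi) * (μ₁ - μ₂) * (σ₂ - σ₁ + σ₃ - σ₄)) := by
    constructor
    · exact ⟨γstar, hps, hfstar, hsstar, hcost_star.symm⟩
    · rintro c ⟨γ, hγp, hγf, hγs, rfl⟩
      haveI := hγp
      have hp2 : Integrable (fun y : ℝ => y ^ 2) (ν.map f₁) := by
        rw [integrable_map_measure (hmy.aestronglyMeasurable)
          hm1.aemeasurable]
        exact hpsq
      have hq2 : Integrable (fun y : ℝ => y ^ 2) (ν.map f₂) := by
        rw [integrable_map_measure (hmy.aestronglyMeasurable)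
          hm2.aemeasurable]
        exact hqsq
      have hx : Integrable (fun z : ℝ × ℝ => z.1 ^ 2) γ := by
        have h := (integrable_map_measure (hmy.aestronglyMeasurable)
          (measurable_fst.aemeasurable (μ := γ))).mp (by rw [hγf]; exact hp2)
        exact h
      have hy : Integrable (fun z : ℝ × ℝ => z.2 ^ 2) γ := by
        have h := (integrable_map_measure (hmy.aestronglyMeasurable)
          (measurable_snd.aemeasurable (μ := γ))).mp (by rw [hγs]; exact hq2)
        exact h
      have e1 : ∫ z, z.1 ^ 2 ∂γ = ∫ z, z.1 ^ 2 ∂γstar := by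
        have t1 := integral_map (μ := γ) measurable_fst.aemeasurable
          (hmy.aestronglyMeasurable (μ := γ.map Prod.fst))
        have t2 := integral_map (μ := γstar) measurable_fst.aemeasurable
          (hmy.aestronglyMeasurable (μ := γstar.map Prod.fst))
        rw [← t1, ← t2, hγf, hfstar]
      have e2 : ∫ z, z.2 ^ 2 ∂γ = ∫ z, z.2 ^ 2 ∂γstar := by
        have t1 := integral_map (μ := γ) measurable_snd.aemeasurable
          (hmy.aestronglyMeasurable (μ := γ.map Prod.snd))
        have t2 := integral_map (μ := γstar) measurable_snd.aemeasurable
          (hmy.aestronglyMeasurable (μ := γstar.map Prod.snd))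
        rw [← t1, ← t2, hγs, hsstar]
      have hmul : ∫ z, z.1 * z.2 ∂γ ≤ ∫ z, z.1 * z.2 ∂γstar := by
        rw [integral_mul_eq_integral_eFun γ hx hy,
          integral_mul_eq_integral_eFun γstar hxstar hystar]
        refine integral_mono (integrable_inner_eFun γ hx hy)
          (integrable_inner_eFun γstar hxstar hystar) ?_
        intro st
        exact integral_eFun_mul_le (hγf.trans hfstar.symm) (hγs.trans hsstar.symm)
          hUU hLL st.1 st.2
      have hcγ := cost_expand γ hx hy
      have hcγs := cost_expand γstar hxstar hystar
      rw [hcγ]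
      rw [hcγs] at hcost_star
      linarith
  rw [W2sq]
  exact key.csInf_eq
end

section
/- Let n ∈ ℕ and let h_μ, h_σ₁, h_σ₂, r_μ, r_σ, t_μ, t_σ₁, t_σ₂ ∈ ℝⁿ satisfy, componentwise, r_σ ⊙ h_σ₁ > 0, r_σ ⊙ h_σ₂ > 0, t_σ₁ > 0 and t_σ₂ > 0. Let x₀ be the product over i of the uniform probability measure on [−√3, √3]. Define F : ℝⁿ → ℝⁿ componentwise by F(x)ᵢ = r_σᵢ·(h_σ₁ᵢ·xᵢ + h_μᵢ) + r_μᵢ if xᵢ ≤ 0 and F(x)ᵢ = r_σᵢ·(h_σ₂ᵢ·xᵢ + h_μᵢ) + r_μᵢ if xᵢ > 0, and G : ℝⁿ → ℝⁿ componentwise by G(x)ᵢ = t_σ₁ᵢ·xᵢ + t_μᵢ if xᵢ ≤ 0 and G(x)ᵢ = t_σ₂ᵢ·xᵢ + t_μᵢ if xᵢ > 0. Then W₂²(F_*x₀, G_*x₀) = ‖r_σ ⊙ h_μ + r_μ − t_μ‖² + (1/2)‖|r_σ ⊙ h_σ₁| − |t_σ₁|‖² + (1/2)‖|r_σ ⊙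 h_σ₂| − |t_σ₂|‖² + √(3/4)·⟨r_σ ⊙ h_μ + r_μ − t_μ, |r_σ ⊙ h_σ₂| − |r_σ ⊙ h_σ₁| + |t_σ₁| − |t_σ₂|⟩. -/
open MeasureTheory ProbabilityTheory
open scoped ENNReal NNReal

/-- The uniform probability measure on `[a, b]`: `(b - a)⁻¹ • (volume.restrict (Set.Icc a b))`. -/
noncomputable def unif (a b : ℝ) : Measure ℝ :=
  (ENNReal.ofReal (b - a))⁻¹ • volume.restrict (Set.Icc a b)

/-- Squared 2-Wasserstein distance between two measures on `ℝⁿ = (Fin n → ℝ)` with the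
Euclidean norm `‖x - y‖² = ∑ i, (x i - y i)²`: the infimum over all couplings `γ` of `p` and
`q` of `∫ ‖x - y‖² dγ(x, y)`. -/
noncomputable def W2sqPi {n : ℕ} (p q : Measure (Fin n → ℝ)) : ℝ :=
  sInf { c | ∃ γ : Measure ((Fin n → ℝ) × (Fin n → ℝ)), IsProbabilityMeasure γ ∧
    γ.map Prod.fst = p ∧ γ.map Prod.snd = q ∧ c = ∫ z, ∑ i, (z.1 i - z.2 i) ^ 2 ∂γ }

/-! ### Auxiliary lemmas -/


noncomputable def Fl (a₁ a₂ c : ℝ) : ℝ → ℝ := fun t => if t ≤ 0 then a₁ * t + c else a₂ * t + c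

noncomputable def phiP (a₁ a₂ b₁ b₂ c d : ℝ) : ℝ → ℝ := fun u =>
  if u ≤ c then u ^ 2 - b₁ / a₁ * (u - c) ^ 2 - 2 * d * (u - c)
  else u ^ 2 - b₂ / a₂ * (u - c) ^ 2 - 2 * d * (u - c)

noncomputable def psiP (a₁ a₂ b₁ b₂ c d : ℝ) : ℝ → ℝ := fun v =>
  if v ≤ d then v ^ 2 - 2 * c * v - a₁ / b₁ * (v - d) ^ 2
  else v ^ 2 - 2 * c * v - a₂ / b₂ * (v - d) ^ 2

lemma Fl_cont (a₁ a₂ c : ℝ) : Continuous (Fl a₁ a₂ c) := by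
  apply Continuous.if_le (by continuity) (by continuity) continuous_id continuous_const
  intro t ht; simp only [id] at ht; subst ht; ring

lemma phiP_cont (a₁ a₂ b₁ b₂ c d : ℝ) : Continuous (phiP a₁ a₂ b₁ b₂ c d) := by
  apply Continuous.if_le (by continuity) (by continuity) continuous_id continuous_const
  intro u hu; simp only [id] at hu; subst hu; ring

lemma psiP_cont (a₁ a₂ b₁ b₂ c d : ℝ) : Continuous (psiP a₁ a₂ b₁ b₂ c d) := by
  apply Continuous.if_le (by continuity) (by continuity) continuous_id continuous_const
  intro v hv; simp only [id] at hv; subst hv; ring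

lemma young_aux {a b : ℝ} (ha : 0 < a) (hb : 0 < b) (s t : ℝ) :
    2 * (s * t) ≤ b / a * s ^ 2 + a / b * t ^ 2 := by
  have key : b / a * s ^ 2 + a / b * t ^ 2 - 2 * (s * t) = (b * s - a * t) ^ 2 / (a * b) := by
    field_simp; ring
  nlinarith [div_nonneg (sq_nonneg (b * s - a * t)) (le_of_lt (mul_pos ha hb))]

lemma phiP_add_psiP_le {a₁ a₂ b₁ b₂ : ℝ} (c d : ℝ) (ha₁ : 0 < a₁) (ha₂ : 0 < a₂)
    (hb₁ : 0 < b₁) (hb₂ : 0 < b₂) (u v : ℝ) :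
    phiP a₁ a₂ b₁ b₂ c d u + psiP a₁ a₂ b₁ b₂ c d v ≤ (u - v) ^ 2 := by
  unfold phiP psiP
  split_ifs with h1 h2 h2
  · nlinarith [young_aux ha₁ hb₁ (u - c) (v - d)]
  · have h1' : u - c ≤ 0 := by linarith
    have h2' : 0 ≤ v - d := by linarith
    nlinarith [mul_nonneg (div_pos hb₁ ha₁).le (sq_nonneg (u - c)),
      mul_nonneg (div_pos ha₂ hb₂).le (sq_nonneg (v - d)),
      mul_nonpos_of_nonpos_of_nonneg h1' h2']
  · have h1' : 0 ≤ u - c := by linarith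
    have h2' : v - d ≤ 0 := by linarith
    nlinarith [mul_nonneg (div_pos hb₂ ha₂).le (sq_nonneg (u - c)),
      mul_nonneg (div_pos ha₁ hb₁).le (sq_nonneg (v - d)),
      mul_nonpos_of_nonneg_of_nonpos h1' h2']
  · nlinarith [young_aux ha₂ hb₂ (u - c) (v - d)]

lemma phiP_add_psiP_eq {a₁ a₂ b₁ b₂ : ℝ} (c d : ℝ) (ha₁ : 0 < a₁) (ha₂ : 0 < a₂)
    (hb₁ : 0 < b₁) (hb₂ : 0 < b₂) (t : ℝ) :
    phiP a₁ a₂ b₁ b₂ c d (Fl a₁ a₂ c t) + psiP a₁ a₂ b₁ b₂ c d (Fl b₁ b₂ d t)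
      = (Fl a₁ a₂ c t - Fl b₁ b₂ d t) ^ 2 := by
  unfold Fl phiP psiP
  rcases le_or_gt t 0 with ht | ht
  · rw [if_pos ht, if_pos ht, if_pos (by nlinarith), if_pos (by nlinarith)]
    field_simp; ring
  · rw [if_neg (not_le.2 ht), if_neg (not_le.2 ht),
      if_neg (by push_neg; nlinarith), if_neg (by push_neg; nlinarith)]
    field_simp; ring

/-! ### Auxiliary integral lemmas -/

lemma sqrt3_pos : 0 < Real.sqrt 3 := Real.sqrt_pos.2 (by norm_num)

lemma int_quad (m e p q : ℝ) :
    ∫ t in p..q, (m * t + e) ^ 2 =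
      m ^ 2 * (q ^ 3 - p ^ 3) / 3 + m * e * (q ^ 2 - p ^ 2) + e ^ 2 * (q - p) := by
  have h : ∀ t ∈ Set.uIcc p q,
      HasDerivAt (fun t : ℝ => m ^ 2 * t ^ 3 / 3 + m * e * t ^ 2 + e ^ 2 * t)
        ((m * t + e) ^ 2) t := by
    intro t _
    have h1 := (((hasDerivAt_pow 3 t).const_mul (m ^ 2)).div_const 3).add
      ((hasDerivAt_pow 2 t).const_mul (m * e))
    have h2 := h1.add ((hasDerivAt_id t).const_mul (e ^ 2))
    refine h2.congr_deriv ?_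
    push_cast
    ring
  rw [intervalIntegral.integral_eq_sub_of_hasDerivAt h
    ((by continuity : Continuous fun x : ℝ => (m * x + e) ^ 2).intervalIntegrable p q)]
  ring

lemma unif_prob {a b : ℝ} (h : a < b) : IsProbabilityMeasure (unif a b) := by
  constructor
  rw [unif, Measure.smul_apply, Measure.restrict_apply MeasurableSet.univ, Set.univ_inter,
    Real.volume_Icc, smul_eq_mul, ENNReal.inv_mul_cancel]
  · simpa using h
  · exact ENNReal.ofReal_ne_top

lemma integral_unif {a b : ℝ} (h : a < b) (f : ℝ → ℝ) :
    ∫ t, f t ∂(unif a b) = (b - a)⁻¹ * ∫ t in a..b, f t := by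
  rw [unif, integral_smul_measure, ENNReal.toReal_inv, ENNReal.toReal_ofReal (by linarith),
    intervalIntegral.integral_of_le h.le, smul_eq_mul, ← integral_Icc_eq_integral_Ioc]

lemma integrable_unif {a b : ℝ} (h : a < b) {f : ℝ → ℝ} (hf : Continuous f) :
    Integrable f (unif a b) := by
  rw [unif]
  refine Integrable.smul_measure ?_ (ENNReal.inv_ne_top.2 (by simpa using h))
  exact hf.integrableOn_Icc

lemma unif_compl {a b : ℝ} : unif a b (Set.Icc a b)ᶜ = 0 := by
  rw [unif, Measure.smul_apply, Measure.restrict_apply (measurableSet_Icc.compl)]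
  simp

lemma integral_Fl_sq (a₁ a₂ b₁ b₂ c d : ℝ) :
    ∫ t, (Fl a₁ a₂ c t - Fl b₁ b₂ d t) ^ 2 ∂(unif (-Real.sqrt 3) (Real.sqrt 3)) =
      (c - d) ^ 2 + (a₁ - b₁) ^ 2 / 2 + (a₂ - b₂) ^ 2 / 2
        + Real.sqrt 3 / 2 * ((a₂ - b₂) - (a₁ - b₁)) * (c - d) := by
  set r := Real.sqrt 3 with hrdef
  have hrpos : 0 < r := sqrt3_pos
  have hr : r ^ 2 = 3 := Real.sq_sqrt (by norm_num)
  have hcont : Continuous fun t => (Fl a₁ a₂ c t - Fl b₁ b₂ d t) ^ 2 :=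
    ((Fl_cont a₁ a₂ c).sub (Fl_cont b₁ b₂ d)).pow 2
  rw [integral_unif (by linarith) _]
  have hsplit := intervalIntegral.integral_add_adjacent_intervals
    (hcont.intervalIntegrable (μ := volume) (-r) 0) (hcont.intervalIntegrable (μ := volume) 0 r)
  rw [← hsplit]
  have hleft : ∫ t in (-r)..0, (Fl a₁ a₂ c t - Fl b₁ b₂ d t) ^ 2
      = ∫ t in (-r)..0, ((a₁ - b₁) * t + (c - d)) ^ 2 := by
    apply intervalIntegral.integral_congr
    intro t ht
    rw [Set.uIcc_of_le (by linarith)] at ht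
    have ht0 : t ≤ 0 := ht.2
    simp only [Fl, if_pos ht0]; ring
  have hright : ∫ t in (0:ℝ)..r, (Fl a₁ a₂ c t - Fl b₁ b₂ d t) ^ 2
      = ∫ t in (0:ℝ)..r, ((a₂ - b₂) * t + (c - d)) ^ 2 := by
    apply intervalIntegral.integral_congr
    intro t ht
    rw [Set.uIcc_of_le (by linarith)] at ht
    simp only [Fl]
    rcases le_or_gt t 0 with h0 | h0
    · have : t = 0 := le_antisymm h0 ht.1
      subst this; simp
    · simp only [if_neg (not_le.2 h0)]; ring
  rw [hleft, hright, int_quad, int_quad]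
  have hrne : r ≠ 0 := ne_of_gt hrpos
  have hr3 : r ^ 3 = 3 * r := by nlinarith [hr]
  field_simp
  ring_nf
  rw [hr3, hr]
  ring

/-! ### Measure-theoretic auxiliary lemmas -/

lemma map_eval_pi {n : ℕ} (μ : Fin n → Measure ℝ) [∀ i, IsProbabilityMeasure (μ i)]
    (i : Fin n) : (Measure.pi μ).map (Function.eval i) = μ i := by
  apply Measure.ext
  intro s hs
  rw [Measure.map_apply (measurable_pi_apply i) hs, Set.eval_preimage, Measure.pi_pi]
  rw [Finset.prod_eq_single i]
  · simp
  · intro j _ hj; simp [Function.update_of_ne hj]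
  · simp

lemma ae_box {n : ℕ} (μ : Fin n → Measure ℝ) [∀ i, IsProbabilityMeasure (μ i)]
    (s : Set ℝ) (hs : ∀ i, μ i sᶜ = 0) :
    ∀ᵐ x ∂(Measure.pi μ), ∀ i, x i ∈ s := by
  rw [ae_all_iff]
  intro i
  have : Measure.pi μ (Function.eval i ⁻¹' sᶜ) = 0 :=
    Measure.pi_eval_preimage_null μ (hs i)
  rw [ae_iff]; exact this

lemma integral_eval {n : ℕ} (ν : Measure ℝ) [IsProbabilityMeasure ν] {f : ℝ → ℝ}
    (hf : Continuous f) (i : Fin n) :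
    ∫ x : Fin n → ℝ, f (x i) ∂(Measure.pi fun _ : Fin n => ν) = ∫ t, f t ∂ν := by
  have h := integral_map (μ := Measure.pi fun _ : Fin n => ν) (f := f)
    (measurable_pi_apply i).aemeasurable hf.aestronglyMeasurable
  rw [map_eval_pi] at h
  exact h.symm

lemma integrable_eval {n : ℕ} (ν : Measure ℝ) [IsProbabilityMeasure ν] {f : ℝ → ℝ}
    (hf : Continuous f) (hfi : Integrable f ν) (i : Fin n) :
    Integrable (fun x : Fin n → ℝ => f (x i)) (Measure.pi fun _ : Fin n => ν) := by
  have h1 : Integrable f ((Measure.pi fun _ : Fin n => ν).map (Function.eval i)) := by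
    rw [map_eval_pi]; exact hfi
  exact (integrable_map_measure hf.aestronglyMeasurable
    (measurable_pi_apply i).aemeasurable).1 h1

lemma main_aux {n : ℕ} (a₁ a₂ b₁ b₂ c d : Fin n → ℝ)
    (ha₁ : ∀ i, 0 < a₁ i) (ha₂ : ∀ i, 0 < a₂ i) (hb₁ : ∀ i, 0 < b₁ i) (hb₂ : ∀ i, 0 < b₂ i) :
    sInf { cost | ∃ γ : Measure ((Fin n → ℝ) × (Fin n → ℝ)), IsProbabilityMeasure γ ∧
      γ.map Prod.fst = (Measure.pi fun _ : Fin n => unif (-Real.sqrt 3) (Real.sqrt 3)).map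
        (fun x i => Fl (a₁ i) (a₂ i) (c i) (x i)) ∧
      γ.map Prod.snd = (Measure.pi fun _ : Fin n => unif (-Real.sqrt 3) (Real.sqrt 3)).map
        (fun x i => Fl (b₁ i) (b₂ i) (d i) (x i)) ∧
      cost = ∫ z, ∑ i, (z.1 i - z.2 i) ^ 2 ∂γ } =
    ∑ i, ((c i - d i) ^ 2 + (a₁ i - b₁ i) ^ 2 / 2 + (a₂ i - b₂ i) ^ 2 / 2
      + Real.sqrt 3 / 2 * ((a₂ i - b₂ i) - (a₁ i - b₁ i)) * (c i - d i)) := by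
  classical
  have hrpos := sqrt3_pos
  haveI hμ0prob : IsProbabilityMeasure (unif (-Real.sqrt 3) (Real.sqrt 3)) :=
    unif_prob (by linarith)
  haveI : ∀ i : Fin n,
      IsProbabilityMeasure ((fun _ : Fin n => unif (-Real.sqrt 3) (Real.sqrt 3)) i) :=
    fun _ => hμ0prob
  set μ0 : Measure ℝ := unif (-Real.sqrt 3) (Real.sqrt 3) with hμ0def
  set x₀ : Measure (Fin n → ℝ) := Measure.pi fun _ : Fin n => μ0 with hx₀def
  haveI hx₀prob : IsProbabilityMeasure x₀ := by rw [hx₀def]; infer_instance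
  set F : (Fin n → ℝ) → Fin n → ℝ := fun x i => Fl (a₁ i) (a₂ i) (c i) (x i) with hFdef
  set G : (Fin n → ℝ) → Fin n → ℝ := fun x i => Fl (b₁ i) (b₂ i) (d i) (x i) with hGdef
  have hFc : Continuous F := continuous_pi fun i => (Fl_cont _ _ _).comp (continuous_apply i)
  have hGc : Continuous G := continuous_pi fun i => (Fl_cont _ _ _).comp (continuous_apply i)
  set Φ : (Fin n → ℝ) → ℝ :=
    fun y => ∑ i, phiP (a₁ i) (a₂ i) (b₁ i) (b₂ i) (c i) (d i) (y i) with hΦdef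
  set Ψ : (Fin n → ℝ) → ℝ :=
    fun y => ∑ i, psiP (a₁ i) (a₂ i) (b₁ i) (b₂ i) (c i) (d i) (y i) with hΨdef
  have hΦc : Continuous Φ :=
    continuous_finset_sum _ fun i _ => (phiP_cont _ _ _ _ _ _).comp (continuous_apply i)
  have hΨc : Continuous Ψ :=
    continuous_finset_sum _ fun i _ => (psiP_cont _ _ _ _ _ _).comp (continuous_apply i)
  have hCc : Continuous fun z : (Fin n → ℝ) × (Fin n → ℝ) => ∑ i, (z.1 i - z.2 i) ^ 2 :=
    continuous_finset_sum _ fun i _ =>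
      (((continuous_apply i).comp continuous_fst).sub
        ((continuous_apply i).comp continuous_snd)).pow 2
  set B : Set (Fin n → ℝ) := Set.pi Set.univ fun _ : Fin n => Set.Icc (-Real.sqrt 3) (Real.sqrt 3)
    with hBdef
  have hBc : IsCompact B := isCompact_univ_pi fun _ => isCompact_Icc
  have hx₀B : ∀ᵐ x ∂x₀, x ∈ B := by
    have h := ae_box (fun _ : Fin n => μ0) (Set.Icc (-Real.sqrt 3) (Real.sqrt 3))
      fun _ => unif_compl
    exact h.mono fun x hx => Set.mem_univ_pi.2 hx
  have hKpc : IsCompact (F '' B) := hBc.image hFc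
  have hKqc : IsCompact (G '' B) := hBc.image hGc
  have hKpm : MeasurableSet (F '' B) := hKpc.isClosed.measurableSet
  have hKqm : MeasurableSet (G '' B) := hKqc.isClosed.measurableSet
  have hpKp : ∀ᵐ y ∂(x₀.map F), y ∈ F '' B := by
    refine (ae_map_iff hFc.measurable.aemeasurable hKpm).2 ?_
    exact hx₀B.mono fun x hx => Set.mem_image_of_mem F hx
  have hqKq : ∀ᵐ y ∂(x₀.map G), y ∈ G '' B := by
    refine (ae_map_iff hGc.measurable.aemeasurable hKqm).2 ?_
    exact hx₀B.mono fun x hx => Set.mem_image_of_mem G hx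
  obtain ⟨Mφ, hMφ⟩ := hKpc.exists_bound_of_continuousOn hΦc.continuousOn
  obtain ⟨Mψ, hMψ⟩ := hKqc.exists_bound_of_continuousOn hΨc.continuousOn
  obtain ⟨MC, hMC⟩ := (hKpc.prod hKqc).exists_bound_of_continuousOn hCc.continuousOn
  haveI hpprob : IsProbabilityMeasure (x₀.map F) :=
    Measure.isProbabilityMeasure_map hFc.measurable.aemeasurable
  haveI hqprob : IsProbabilityMeasure (x₀.map G) :=
    Measure.isProbabilityMeasure_map hGc.measurable.aemeasurable
  have hΦint : Integrable Φ (x₀.map F) := by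
    refine Integrable.mono' (integrable_const Mφ) hΦc.aestronglyMeasurable ?_
    filter_upwards [hpKp] with y hy using hMφ y hy
  have hΨint : Integrable Ψ (x₀.map G) := by
    refine Integrable.mono' (integrable_const Mψ) hΨc.aestronglyMeasurable ?_
    filter_upwards [hqKq] with y hy using hMψ y hy
  set V : ℝ := ∫ y, Φ y ∂(x₀.map F) + ∫ y, Ψ y ∂(x₀.map G) with hVdef
  -- lower bound for every coupling
  have hlb : ∀ cost ∈ { cost | ∃ γ : Measure ((Fin n → ℝ) × (Fin n → ℝ)),
      IsProbabilityMeasure γ ∧ γ.map Prod.fst = x₀.map F ∧ γ.map Prod.snd = x₀.map G ∧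
      cost = ∫ z, ∑ i, (z.1 i - z.2 i) ^ 2 ∂γ }, V ≤ cost := by
    rintro cost ⟨γ, hγprob, hγ1, hγ2, rfl⟩
    haveI := hγprob
    have hγKp : ∀ᵐ z : (Fin n → ℝ) × (Fin n → ℝ) ∂γ, z.1 ∈ F '' B := by
      have h1 : ∀ᵐ y ∂(γ.map Prod.fst), y ∈ F '' B := by rw [hγ1]; exact hpKp
      exact (ae_map_iff measurable_fst.aemeasurable hKpm).1 h1
    have hγKq : ∀ᵐ z : (Fin n → ℝ) × (Fin n → ℝ) ∂γ, z.2 ∈ G '' B := by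
      have h1 : ∀ᵐ y ∂(γ.map Prod.snd), y ∈ G '' B := by rw [hγ2]; exact hqKq
      exact (ae_map_iff measurable_snd.aemeasurable hKqm).1 h1
    have hCint : Integrable (fun z : (Fin n → ℝ) × (Fin n → ℝ) => ∑ i, (z.1 i - z.2 i) ^ 2) γ := by
      refine Integrable.mono' (integrable_const MC) hCc.aestronglyMeasurable ?_
      filter_upwards [hγKp, hγKq] with z h1 h2 using hMC z (Set.mem_prod.2 ⟨h1, h2⟩)
    have hΦf : Integrable (fun z : (Fin n → ℝ) × (Fin n → ℝ) => Φ z.1) γ := by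
      refine Integrable.mono' (integrable_const Mφ)
        (hΦc.comp continuous_fst).aestronglyMeasurable ?_
      filter_upwards [hγKp] with z h1 using hMφ _ h1
    have hΨs : Integrable (fun z : (Fin n → ℝ) × (Fin n → ℝ) => Ψ z.2) γ := by
      refine Integrable.mono' (integrable_const Mψ)
        (hΨc.comp continuous_snd).aestronglyMeasurable ?_
      filter_upwards [hγKq] with z h2 using hMψ _ h2
    have hpt : ∀ z : (Fin n → ℝ) × (Fin n → ℝ), Φ z.1 + Ψ z.2 ≤ ∑ i, (z.1 i - z.2 i) ^ 2 := by
      intro z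
      have hsum : Φ z.1 + Ψ z.2 = ∑ i, (phiP (a₁ i) (a₂ i) (b₁ i) (b₂ i) (c i) (d i) (z.1 i)
          + psiP (a₁ i) (a₂ i) (b₁ i) (b₂ i) (c i) (d i) (z.2 i)) := by
        simp only [hΦdef, hΨdef]
        rw [Finset.sum_add_distrib]
      rw [hsum]
      exact Finset.sum_le_sum fun i _ =>
        phiP_add_psiP_le _ _ (ha₁ i) (ha₂ i) (hb₁ i) (hb₂ i) _ _
    calc V = ∫ z, Φ z.1 ∂γ + ∫ z, Ψ z.2 ∂γ := by
            rw [hVdef, ← hγ1, ← hγ2,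
              integral_map measurable_fst.aemeasurable hΦc.aestronglyMeasurable,
              integral_map measurable_snd.aemeasurable hΨc.aestronglyMeasurable]
      _ = ∫ z, (Φ z.1 + Ψ z.2) ∂γ := (integral_add hΦf hΨs).symm
      _ ≤ ∫ z, ∑ i, (z.1 i - z.2 i) ^ 2 ∂γ := integral_mono (hΦf.add hΨs) hCint hpt
  -- the optimal coupling
  have hpairm : Measurable fun x => (F x, G x) := (hFc.prodMk hGc).measurable
  have hγ₀1 : (x₀.map fun x => (F x, G x)).map Prod.fst = x₀.map F := by
    rw [Measure.map_map measurable_fst hpairm]; rfl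
  have hγ₀2 : (x₀.map fun x => (F x, G x)).map Prod.snd = x₀.map G := by
    rw [Measure.map_map measurable_snd hpairm]; rfl
  have hc₀ : ∫ z, ∑ i, (z.1 i - z.2 i) ^ 2 ∂(x₀.map fun x => (F x, G x))
      = ∫ x, ∑ i, (F x i - G x i) ^ 2 ∂x₀ :=
    integral_map hpairm.aemeasurable hCc.aestronglyMeasurable
  have hmem : (∫ x, ∑ i, (F x i - G x i) ^ 2 ∂x₀) ∈ { cost | ∃ γ :
      Measure ((Fin n → ℝ) × (Fin n → ℝ)), IsProbabilityMeasure γ ∧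
      γ.map Prod.fst = x₀.map F ∧ γ.map Prod.snd = x₀.map G ∧
      cost = ∫ z, ∑ i, (z.1 i - z.2 i) ^ 2 ∂γ } :=
    ⟨x₀.map fun x => (F x, G x), Measure.isProbabilityMeasure_map hpairm.aemeasurable,
      hγ₀1, hγ₀2, hc₀.symm⟩
  -- the optimal coupling achieves V
  have hΦFint : Integrable (fun x => Φ (F x)) x₀ := by
    refine Integrable.mono' (integrable_const Mφ) (hΦc.comp hFc).aestronglyMeasurable ?_
    filter_upwards [hx₀B] with x hx using hMφ _ (Set.mem_image_of_mem F hx)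
  have hΨGint : Integrable (fun x => Ψ (G x)) x₀ := by
    refine Integrable.mono' (integrable_const Mψ) (hΨc.comp hGc).aestronglyMeasurable ?_
    filter_upwards [hx₀B] with x hx using hMψ _ (Set.mem_image_of_mem G hx)
  have hVeq : ∫ x, ∑ i, (F x i - G x i) ^ 2 ∂x₀ = V := by
    have hpt : ∀ x, ∑ i, (F x i - G x i) ^ 2 = Φ (F x) + Ψ (G x) := by
      intro x
      simp only [hΦdef, hΨdef, hFdef, hGdef]
      rw [← Finset.sum_add_distrib]
      exact Finset.sum_congr rfl fun i _ =>
        (phiP_add_psiP_eq _ _ (ha₁ i) (ha₂ i) (hb₁ i) (hb₂ i) (x i)).symm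
    rw [show (∫ x, ∑ i, (F x i - G x i) ^ 2 ∂x₀) = ∫ x, (Φ (F x) + Ψ (G x)) ∂x₀ from
        integral_congr_ae (Filter.Eventually.of_forall hpt),
      integral_add hΦFint hΨGint, hVdef,
      integral_map hFc.measurable.aemeasurable hΦc.aestronglyMeasurable,
      integral_map hGc.measurable.aemeasurable hΨc.aestronglyMeasurable]
  -- value of the optimal coupling
  have hfub : ∫ x, ∑ i, (F x i - G x i) ^ 2 ∂x₀
      = ∑ i, ((c i - d i) ^ 2 + (a₁ i - b₁ i) ^ 2 / 2 + (a₂ i - b₂ i) ^ 2 / 2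
        + Real.sqrt 3 / 2 * ((a₂ i - b₂ i) - (a₁ i - b₁ i)) * (c i - d i)) := by
    have hci : ∀ i : Fin n, Continuous fun t : ℝ =>
        (Fl (a₁ i) (a₂ i) (c i) t - Fl (b₁ i) (b₂ i) (d i) t) ^ 2 :=
      fun i => ((Fl_cont _ _ _).sub (Fl_cont _ _ _)).pow 2
    have hint : ∀ i : Fin n, Integrable (fun x : Fin n → ℝ => (F x i - G x i) ^ 2) x₀ :=
      fun i => integrable_eval μ0 (hci i) (integrable_unif (by linarith) (hci i)) i
    rw [integral_finset_sum _ fun i _ => hint i]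
    exact Finset.sum_congr rfl fun i _ =>
      (integral_eval μ0 (hci i) i).trans (integral_Fl_sq _ _ _ _ _ _)
  rw [← hfub]
  exact le_antisymm (csInf_le ⟨V, fun b hb => hlb b hb⟩ hmem)
    (le_csInf ⟨_, hmem⟩ fun b hb => by rw [hVeq]; exact hlb b hb)

/-- NFE-2 scoring function, uniform case: the squared 2-Wasserstein distance between the
pushforwards of the product uniform measure on [-√3, √3]ⁿ under the componentwise
piecewise linear maps F and G. -/
theorem W2sq_piecewise_pi_pushforward_unif (n : ℕ)
    (hμ hσ₁ hσ₂ rμ rσ tμ tσ₁ tσ₂ : Fin n → ℝ)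
    (h₁ : ∀ i, 0 < rσ i * hσ₁ i) (h₂ : ∀ i, 0 < rσ i * hσ₂ i)
    (h₃ : ∀ i, 0 < tσ₁ i) (h₄ : ∀ i, 0 < tσ₂ i) :
    W2sqPi
      ((Measure.pi fun _ : Fin n => unif (-Real.sqrt 3) (Real.sqrt 3)).map
        fun x i => if x i ≤ 0 then rσ i * (hσ₁ i * x i + hμ i) + rμ i
                   else rσ i * (hσ₂ i * x i + hμ i) + rμ i)
      ((Measure.pi fun _ : Fin n => unif (-Real.sqrt 3) (Real.sqrt 3)).map
        fun x i => if x i ≤ 0 then tσ₁ i * x i + tμ i else tσ₂ i * x i + tμ i) =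
      (∑ i, ((rσ * hμ + rμ - tμ) i) ^ 2)
        + (1 / 2) * (∑ i, ((|rσ * hσ₁| - |tσ₁|) i) ^ 2)
        + (1 / 2) * (∑ i, ((|rσ * hσ₂| - |tσ₂|) i) ^ 2)
        + Real.sqrt (3 / 4) *
            ∑ i, (rσ * hμ + rμ - tμ) i * (|rσ * hσ₂| - |rσ * hσ₁| + |tσ₁| - |tσ₂|) i := by
  have hFeq : (fun (x : Fin n → ℝ) i => if x i ≤ 0 then rσ i * (hσ₁ i * x i + hμ i) + rμ i
      else rσ i * (hσ₂ i * x i + hμ i) + rμ i)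
      = fun (x : Fin n → ℝ) i => Fl (rσ i * hσ₁ i) (rσ i * hσ₂ i) (rσ i * hμ i + rμ i) (x i) := by
    funext x i
    simp only [Fl]
    split_ifs <;> ring
  have hGeq : (fun (x : Fin n → ℝ) i => if x i ≤ 0 then tσ₁ i * x i + tμ i
      else tσ₂ i * x i + tμ i)
      = fun (x : Fin n → ℝ) i => Fl (tσ₁ i) (tσ₂ i) (tμ i) (x i) := by
    funext x i
    simp only [Fl]
  have h4 : Real.sqrt 4 = 2 := by
    rw [show (4:ℝ) = 2 ^ 2 by norm_num, Real.sqrt_sq (by norm_num : (0:ℝ) ≤ 2)]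
  have h34 : Real.sqrt (3 / 4) = Real.sqrt 3 / 2 := by
    rw [Real.sqrt_div (by norm_num : (0:ℝ) ≤ 3) 4, h4]
  rw [W2sqPi, hFeq, hGeq,
    main_aux (fun i => rσ i * hσ₁ i) (fun i => rσ i * hσ₂ i) tσ₁ tσ₂
      (fun i => rσ i * hμ i + rμ i) tμ h₁ h₂ h₃ h₄, h34,
    Finset.mul_sum, Finset.mul_sum, Finset.mul_sum,
    ← Finset.sum_add_distrib, ← Finset.sum_add_distrib, ← Finset.sum_add_distrib]
  refine Finset.sum_congr rfl fun i _ => ?_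
  simp only [Pi.sub_apply, Pi.add_apply, Pi.mul_apply, Pi.abs_apply]
  rw [abs_of_pos (h₁ i), abs_of_pos (h₂ i), abs_of_pos (h₃ i), abs_of_pos (h₄ i)]
  ring
end

section
/- (NFE-1 learns symmetry rules.) Let n ∈ ℕ and r_μ, r_σ ∈ ℝⁿ satisfy r_σ ⊙ r_σ = 1 (the all-ones vector) and r_σ ⊙ r_μ + r_μ = 0. Then for all h_μ, h_σ, t_μ, t_σ ∈ ℝⁿ: if r_σ ⊙ h_μ + r_μ = t_μ and |r_σ ⊙ h_σ| = |t_σ|, then r_σ ⊙ t_μ + r_μ = h_μ and |r_σ ⊙ t_σ| = |h_σ|. -/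
theorem mul_add_mul_add_of_mul_self_eq_one {R : Type*} [Ring R] {s m : R}
    (hs : s * s = 1) (hm : s * m + m = 0) (x : R) : s * (s * x + m) + m = x := by
  rw [mul_add, ← mul_assoc, hs, one_mul, add_assoc, hm, add_zero]

theorem abs_eq_one_of_mul_self_eq_one {R : Type*} [Ring R] [LinearOrder R]
    [IsStrictOrderedRing R] {s : R} (hs : s * s = 1) : |s| = 1 := by
  simpa using (sq_eq_sq_iff_abs_eq_abs s 1).mp (by rw [sq, hs, one_pow])

theorem abs_mul_eq_of_abs_mul_eq {R : Type*} [Ring R] [LinearOrder R]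
    [IsStrictOrderedRing R] {s x y : R} (hs : s * s = 1) (hxy : |s * x| = |y|) :
    |s * y| = |x| := by
  rw [abs_mul, abs_eq_one_of_mul_self_eq_one hs, one_mul, ← hxy, abs_mul,
    abs_eq_one_of_mul_self_eq_one hs, one_mul]

/-- NFE-1 learns symmetry rules: if r_σ ⊙ r_σ = 1 and r_σ ⊙ r_μ + r_μ = 0, then whenever
a triplet (h, r, t) attains the maximal score, so does (t, r, h). -/
theorem nfe1_symmetry (n : ℕ) (rμ rσ : Fin n → ℝ)
    (h₁ : rσ * rσ = 1) (h₂ : rσ * rμ + rμ = 0) :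
    ∀ hμ hσ tμ tσ : Fin n → ℝ,
      rσ * hμ + rμ = tμ → |rσ * hσ| = |tσ| →
      rσ * tμ + rμ = hμ ∧ |rσ * tσ| = |hσ| := by
  rintro hμ hσ tμ tσ rfl hσtσ
  refine ⟨mul_add_mul_add_of_mul_self_eq_one h₁ h₂ hμ, funext fun i => ?_⟩
  exact abs_mul_eq_of_abs_mul_eq (congrFun h₁ i) (congrFun hσtσ i)
end

section
/- (NFE-1 learns antisymmetry rules.) Let n ∈ ℕ and r_μ, r_σ ∈ ℝⁿ with every entry of r_σ nonzero, and suppose r_σ ⊙ r_σ ≠ 1 or r_σ ⊙ r_μ + r_μ ≠ 0. Then for every h_μ ∈ ℝⁿ and every h_σ ∈ ℝⁿ with all entries nonzero, setting t_μ = r_σ ⊙ h_μ + r_μ and t_σ = r_σ ⊙ h_σ (so that the triplet (h, r, t) attains maximal score), it is NOT the case that both r_σ ⊙ t_μ + r_μ = h_μ and |r_σ ⊙ t_σ| = |h_σ| hold. -/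
open MeasureTheory ProbabilityTheory
open scoped ENNReal NNReal

/-! Applying `x ↦ r_σ ⊙ x + r_μ` twice sends `h_σ` to `r_σ ⊙ r_σ ⊙ h_σ`; since `r_σ ⊙ r_σ ≥ 0`
and `h_σ` has no zero entry, returning to `|h_σ|` forces `r_σ ⊙ r_σ = 1`. Then the twice-applied
map on means is `h_μ ↦ h_μ + (r_σ ⊙ r_μ + r_μ)`, so returning to `h_μ` forces
`r_σ ⊙ r_μ + r_μ = 0`. -/

theorem mul_self_eq_one_of_abs_mul_mul_eq_abs {R : Type*} [CommRing R] [LinearOrder R]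
    [IsStrictOrderedRing R] {a b : R} (hb : b ≠ 0) (h : |a * (a * b)| = |b|) : a * a = 1 := by
  rw [← mul_assoc, abs_mul, abs_mul_self] at h
  exact mul_right_cancel₀ (abs_ne_zero.mpr hb) (h.trans (one_mul _).symm)

theorem add_eq_zero_of_mul_self_eq_one_of_affine_twice_eq {R : Type*} [CommRing R]
    {a m x : R} (ha : a * a = 1) (h : a * (a * x + m) + m = x) : a * m + m = 0 := by
  linear_combination h - x * ha

theorem nfe1_antisymmetry_general (n : ℕ) (rμ rσ : Fin n → ℝ)
    (h : rσ * rσ ≠ 1 ∨ rσ * rμ + rμ ≠ 0) :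
    ∀ hμ hσ : Fin n → ℝ, (∀ i, hσ i ≠ 0) →
      ¬(rσ * (rσ * hμ + rμ) + rμ = hμ ∧ |rσ * (rσ * hσ)| = |hσ|) := by
  rintro hμ hσ hhσ ⟨hμ_back, hσ_back⟩
  have hsq : rσ * rσ = 1 :=
    funext fun i => mul_self_eq_one_of_abs_mul_mul_eq_abs (hhσ i) (congrFun hσ_back i)
  exact h.elim (· hsq) (· (add_eq_zero_of_mul_self_eq_one_of_affine_twice_eq hsq hμ_back))

/-- NFE-1 learns antisymmetry rules: if r_σ ⊙ r_σ ≠ 1 or r_σ ⊙ r_μ + r_μ ≠ 0, then for a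
triplet (h, r, t) attaining the maximal score (t_μ = r_σ ⊙ h_μ + r_μ, t_σ = r_σ ⊙ h_σ),
the reversed triplet (t, r, h) does not attain the maximal score. -/
theorem nfe1_antisymmetry (n : ℕ) (rμ rσ : Fin n → ℝ) (hrσ : ∀ i, rσ i ≠ 0)
    (h : rσ * rσ ≠ 1 ∨ rσ * rμ + rμ ≠ 0) :
    ∀ hμ hσ : Fin n → ℝ, (∀ i, hσ i ≠ 0) →
      ¬(rσ * (rσ * hμ + rμ) + rμ = hμ ∧ |rσ * (rσ * hσ)| = |hσ|) :=
  nfe1_antisymmetry_general n rμ rσ h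
end

section
/- (NFE-1 learns inverse rules.) Let n ∈ ℕ and r₁_μ, r₁_σ, r₂_μ, r₂_σ ∈ ℝⁿ satisfy r₂_σ ⊙ r₁_σ = 1 (the all-ones vector) and r₂_σ ⊙ r₁_μ + r₂_μ = 0. Then for all h_μ, h_σ, t_μ, t_σ ∈ ℝⁿ: if r₁_σ ⊙ h_μ + r₁_μ = t_μ and |r₁_σ ⊙ h_σ| = |t_σ|, then r₂_σ ⊙ t_μ + r₂_μ = h_μ and |r₂_σ ⊙ t_σ| = |h_σ|. -/
open MeasureTheory ProbabilityTheory
open scoped ENNReal NNReal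

/-- NFE-1 learns inverse rules: if r₂_σ ⊙ r₁_σ = 1 and r₂_σ ⊙ r₁_μ + r₂_μ = 0, then
whenever (h, r₁, t) attains the maximal score, so does (t, r₂, h). -/
theorem nfe1_inverse (n : ℕ) (r₁μ r₁σ r₂μ r₂σ : Fin n → ℝ)
    (h₁ : r₂σ * r₁σ = 1) (h₂ : r₂σ * r₁μ + r₂μ = 0) :
    ∀ hμ hσ tμ tσ : Fin n → ℝ,
      r₁σ * hμ + r₁μ = tμ → |r₁σ * hσ| = |tσ| →
      r₂σ * tμ + r₂μ = hμ ∧ |r₂σ * tσ| = |hσ| := by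
  intro hμ hσ tμ tσ e1 e2
  constructor
  · funext i
    have a1 := congrFun h₁ i
    have a2 := congrFun h₂ i
    have a3 := congrFun e1 i
    simp [Pi.mul_apply, Pi.add_apply] at a1 a2 a3 ⊢
    linear_combination (-r₂σ i) * a3 + hμ i * a1 + a2
  · funext i
    have a1 := congrFun h₁ i
    have a2 := congrFun e2 i
    simp [Pi.mul_apply, Pi.abs_apply] at a1 a2 ⊢
    rw [← a2, ← mul_assoc, ← abs_mul, a1, abs_one, one_mul]
end

section
/- (NFE-1 learns composition rules.) Let n ∈ ℕ and r₁_μ, r₁_σ, r₂_μ, r₂_σ, r₃_μ, r₃_σ ∈ ℝⁿ satisfy r₃_σ = r₁_σ ⊙ r₂_σ and r₃_μ = r₂_σ ⊙ r₁_μ + r₂_μ. Then for all h_μ, h_σ, t̃_μ, t̃_σ, t_μ, t_σ ∈ ℝⁿ: if r₁_σ ⊙ h_μ + r₁_μ = t̃_μ, |r₁_σ ⊙ h_σ| = |t̃_σ|, r₂_σ ⊙ t̃_μ + r₂_μ = t_μ and |r₂_σ ⊙ t̃_σ| = |t_σ|, then r₃_σ ⊙ h_μ + r₃_μ = t_μ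 and |r₃_σ ⊙ h_σ| = |t_σ|. -/
open MeasureTheory ProbabilityTheory
open scoped ENNReal NNReal

/-! Both parts of an NFE-1 relation act coordinatewise: the mean by the affine map
`x ↦ r_σ ⊙ x + r_μ` and the spread by scaling `|x| ↦ |r_σ| ⊙ |x|`. Composing the affine maps of
`r₁` and `r₂` gives the affine map of `r₃`, and since `|·|` is multiplicative coordinatewise the
scalings compose to the scaling by `|r₁_σ ⊙ r₂_σ|`. -/

theorem mul_add_comp_mul_add {R : Type*} [CommSemiring R] (a₁ b₁ a₂ b₂ x : R) :
    a₂ * (a₁ * x + b₁) + b₂ = a₁ * a₂ * x + (a₂ * b₁ + b₂) := by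
  ring

theorem Pi.abs_mul {ι R : Type*} [Ring R] [LinearOrder R] [IsOrderedRing R] (f g : ι → R) :
    |f * g| = |f| * |g| :=
  funext fun i => _root_.abs_mul (f i) (g i)

theorem abs_mul_mul_eq_of_abs_mul_eq {ι R : Type*} [CommRing R] [LinearOrder R]
    [IsOrderedRing R] {a₁ a₂ x y : ι → R} (h : |a₁ * x| = |y|) :
    |a₁ * a₂ * x| = |a₂ * y| := by
  rw [mul_right_comm, Pi.abs_mul, h, ← Pi.abs_mul, mul_comm]

/-- NFE-1 learns composition rules: if r₃_σ = r₁_σ ⊙ r₂_σ and r₃_μ = r₂_σ ⊙ r₁_μ + r₂_μ,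
then whenever (h, r₁, t~) and (t~, r₂, t) attain the maximal score, so does (h, r₃, t). -/
theorem nfe1_composition (n : ℕ) (r₁μ r₁σ r₂μ r₂σ r₃μ r₃σ : Fin n → ℝ)
    (h₁ : r₃σ = r₁σ * r₂σ) (h₂ : r₃μ = r₂σ * r₁μ + r₂μ) :
    ∀ hμ hσ t'μ t'σ tμ tσ : Fin n → ℝ,
      r₁σ * hμ + r₁μ = t'μ → |r₁σ * hσ| = |t'σ| →
      r₂σ * t'μ + r₂μ = tμ → |r₂σ * t'σ| = |tσ| →
      r₃σ * hμ + r₃μ = tμ ∧ |r₃σ * hσ| = |tσ| := by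
  rintro hμ hσ t'μ t'σ tμ tσ rfl hσ₁ rfl hσ₂
  subst h₁ h₂
  exact ⟨(mul_add_comp_mul_add _ _ _ _ _).symm, hσ₂ ▸ abs_mul_mul_eq_of_abs_mul_eq hσ₁⟩
end
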